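/- arXiv:1306.3676 — 8 statements merged into one kernel-verified Lean document; each statement's English description precedes it below -/
import Mathlib

section
/- Let P(x) = Σ_{k=0}^K p_k x^k be a polynomial with real coefficients and h(t) = P(ln t)·t^{-1}. If f_1, f_2 : (0,∞) → ℂ are measurable and satisfy |f_j(t)| ≤ C t^{-1/2}(1+|ln t|)^{-n} for some constant C and some n > K+1, then ∫_0^∞ (∫_0^∞ h(t+s) f_1(s) ds) · conj(f_2(t)) dt = ∫_0^∞ f_1(t) · conj(∫_0^∞ h(t+s) f_2(s) ds) dt, i.e. the Hankel operator with kernel h is symmetric on 𝒟_0. -/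
open MeasureTheory Real Set ComplexConjugate

lemma aux_integrable {m : ℝ} (hm : m < -1) :
    IntegrableOn (fun t : ℝ => t⁻¹ * (1 + |Real.log t|) ^ m) (Ioi 0) := by
  have himg : Ioi (0:ℝ) = Real.exp '' Set.univ := by rw [Set.image_univ, Real.range_exp]
  rw [himg,
    integrableOn_image_iff_integrableOn_abs_deriv_smul MeasurableSet.univ
      (fun x _ => (Real.hasDerivAt_exp x).hasDerivWithinAt) Real.exp_injective.injOn _]
  rw [integrableOn_univ]
  have heq : (fun x : ℝ => |Real.exp x| • ((Real.exp x)⁻¹ * (1 + |Real.log (Real.exp x)|) ^ m))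
      = fun x : ℝ => (1 + |x|) ^ m := by
    funext x
    rw [Real.log_exp, abs_of_pos (Real.exp_pos x), smul_eq_mul, ← mul_assoc,
      mul_inv_cancel₀ (Real.exp_ne_zero x), one_mul]
  rw [heq]
  have h1 : ((Module.finrank ℝ ℝ : ℝ)) < -m := by
    simp only [Module.finrank_self, Nat.cast_one]; linarith
  simpa [Real.norm_eq_abs] using integrable_one_add_norm (E := ℝ) h1

lemma log_add_abs_le {t s : ℝ} (ht : 0 < t) (hs : 0 < s) :
    |Real.log (t + s)| ≤ (1 + |Real.log t|) * (1 + |Real.log s|) := by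
  have hmax : max t s ≤ t + s := max_le (by linarith) (by linarith)
  have h2 : t + s ≤ 2 * max t s := by
    rcases le_total t s with h | h
    · simp [max_eq_right h]; linarith
    · simp [max_eq_left h]; linarith
  have hmaxpos : 0 < max t s := lt_max_of_lt_left ht
  have hub : Real.log (t + s) ≤ Real.log 2 + max (Real.log t) (Real.log s) := by
    calc Real.log (t + s) ≤ Real.log (2 * max t s) :=
          Real.log_le_log (by linarith) h2
      _ = Real.log 2 + Real.log (max t s) := Real.log_mul (by norm_num) (ne_of_gt hmaxpos)
      _ = Real.log 2 + max (Real.log t) (Real.log s) := by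
          rcases le_total t s with h | h
          · rw [max_eq_right h, max_eq_right (Real.log_le_log ht h)]
          · rw [max_eq_left h, max_eq_left (Real.log_le_log hs h)]
  have hlb : max (Real.log t) (Real.log s) ≤ Real.log (t + s) := by
    rcases le_total t s with h | h
    · rw [max_eq_right (Real.log_le_log ht h)]; exact Real.log_le_log hs (by linarith)
    · rw [max_eq_left (Real.log_le_log hs h)]; exact Real.log_le_log ht (by linarith)
  have h2' : Real.log 2 ≤ 1 := by
    have := Real.log_le_sub_one_of_pos (by norm_num : (0:ℝ) < 2); linarith
  have habs : |Real.log (t + s)| ≤ 1 + |Real.log t| + |Real.log s| := by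
    rw [abs_le]
    constructor
    · have : -(|Real.log t| + |Real.log s|) ≤ max (Real.log t) (Real.log s) := by
        have := neg_abs_le (Real.log t)
        have h2 := le_max_left (Real.log t) (Real.log s)
        have h3 := abs_nonneg (Real.log s)
        linarith
      linarith
    · have : max (Real.log t) (Real.log s) ≤ |Real.log t| + |Real.log s| := by
        apply max_le
        · have := le_abs_self (Real.log t); have := abs_nonneg (Real.log s); linarith
        · have := le_abs_self (Real.log s); have := abs_nonneg (Real.log t); linarith
      linarith
  nlinarith [abs_nonneg (Real.log t), abs_nonneg (Real.log s)]

lemma inv_add_le {t s : ℝ} (ht : 0 < t) (hs : 0 < s) :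
    (t + s)⁻¹ ≤ t ^ (-(1:ℝ)/2) * s ^ (-(1:ℝ)/2) := by
  have h1 : t ^ (-(1:ℝ)/2) = (Real.sqrt t)⁻¹ := by
    rw [show (-(1:ℝ)/2) = -(1/2) by ring, Real.rpow_neg ht.le, Real.sqrt_eq_rpow]
  have h2 : s ^ (-(1:ℝ)/2) = (Real.sqrt s)⁻¹ := by
    rw [show (-(1:ℝ)/2) = -(1/2) by ring, Real.rpow_neg hs.le, Real.sqrt_eq_rpow]
  rw [h1, h2, ← mul_inv]
  have hsq : Real.sqrt t * Real.sqrt s ≤ t + s := by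
    rw [← Real.sqrt_mul ht.le]
    calc Real.sqrt (t * s) ≤ Real.sqrt ((t + s) ^ 2) := by
          apply Real.sqrt_le_sqrt; nlinarith
      _ = t + s := Real.sqrt_sq (by linarith)
  exact inv_anti₀ (by positivity) hsq

lemma term_bound {t s C n : ℝ} (ht : 0 < t) (hs : 0 < s) (k : ℕ) :
    |Real.log (t + s)| ^ k * (t + s)⁻¹ *
      ((C * s ^ (-(1:ℝ)/2) * (1 + |Real.log s|) ^ (-n)) *
        (C * t ^ (-(1:ℝ)/2) * (1 + |Real.log t|) ^ (-n)))
    ≤ C ^ 2 * ((t⁻¹ * (1 + |Real.log t|) ^ ((k:ℝ) - n)) *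
        (s⁻¹ * (1 + |Real.log s|) ^ ((k:ℝ) - n))) := by
  set A := 1 + |Real.log t| with hAdef
  set B := 1 + |Real.log s| with hBdef
  have hA0 : 0 < A := by positivity
  have hB0 : 0 < B := by positivity
  have hts : 0 < t + s := by linarith
  have eA : A ^ ((k:ℝ) - n) = A ^ k * A ^ (-n) := by
    rw [← Real.rpow_natCast A k, ← Real.rpow_add hA0]; ring_nf
  have eB : B ^ ((k:ℝ) - n) = B ^ k * B ^ (-n) := by
    rw [← Real.rpow_natCast B k, ← Real.rpow_add hB0]; ring_nf
  have et : t⁻¹ = t ^ (-(1:ℝ)/2) * t ^ (-(1:ℝ)/2) := by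
    rw [← Real.rpow_neg_one t, ← Real.rpow_add ht]; norm_num
  have es : s⁻¹ = s ^ (-(1:ℝ)/2) * s ^ (-(1:ℝ)/2) := by
    rw [← Real.rpow_neg_one s, ← Real.rpow_add hs]; norm_num
  have h1 : |Real.log (t + s)| ^ k ≤ (A * B) ^ k :=
    pow_le_pow_left₀ (abs_nonneg _) (log_add_abs_le ht hs) k
  have h2 : (t + s)⁻¹ ≤ t ^ (-(1:ℝ)/2) * s ^ (-(1:ℝ)/2) := inv_add_le ht hs
  have step : |Real.log (t + s)| ^ k * (t + s)⁻¹
      ≤ (A * B) ^ k * (t ^ (-(1:ℝ)/2) * s ^ (-(1:ℝ)/2)) :=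
    mul_le_mul h1 h2 (inv_nonneg.mpr hts.le) (pow_nonneg (by positivity) k)
  calc |Real.log (t + s)| ^ k * (t + s)⁻¹ *
        ((C * s ^ (-(1:ℝ)/2) * B ^ (-n)) * (C * t ^ (-(1:ℝ)/2) * A ^ (-n)))
      = C ^ 2 * (|Real.log (t + s)| ^ k * (t + s)⁻¹ *
          ((t ^ (-(1:ℝ)/2) * A ^ (-n)) * (s ^ (-(1:ℝ)/2) * B ^ (-n)))) := by ring
    _ ≤ C ^ 2 * ((A * B) ^ k * (t ^ (-(1:ℝ)/2) * s ^ (-(1:ℝ)/2)) *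
          ((t ^ (-(1:ℝ)/2) * A ^ (-n)) * (s ^ (-(1:ℝ)/2) * B ^ (-n)))) := by
        apply mul_le_mul_of_nonneg_left _ (sq_nonneg C)
        exact mul_le_mul_of_nonneg_right step (by positivity)
    _ = C ^ 2 * ((t⁻¹ * A ^ ((k:ℝ) - n)) * (s⁻¹ * B ^ ((k:ℝ) - n))) := by
        rw [eA, eB, et, es, mul_pow]; ring

/-- The real kernel `h(t) = P(ln t) t⁻¹` where `P(x) = ∑_{k=0}^K p_k x^k` has real
coefficients. -/
noncomputable def hankelLogKernelR (K : ℕ) (p : ℕ → ℝ) (t : ℝ) : ℝ :=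
  (∑ k ∈ Finset.range (K + 1), p k * (Real.log t) ^ k) / t

/-- The Hankel operator with kernel `P(ln t) t⁻¹`, `P` a real polynomial of degree `≤ K`, is
symmetric on the class `𝒟₀` of measurable functions satisfying
`|f(t)| ≤ C t^{-1/2} (1+|ln t|)^{-n}` with `n > K+1`. -/
theorem hankel_log_kernel_symmetric
    (K : ℕ) (p : ℕ → ℝ) (f₁ f₂ : ℝ → ℂ) (hf₁ : Measurable f₁) (hf₂ : Measurable f₂)
    (C n : ℝ) (hn : (K : ℝ) + 1 < n)
    (hbound₁ : ∀ t ∈ Ioi (0 : ℝ),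
      ‖f₁ t‖ ≤ C * t ^ (-(1 : ℝ) / 2) * (1 + |Real.log t|) ^ (-n))
    (hbound₂ : ∀ t ∈ Ioi (0 : ℝ),
      ‖f₂ t‖ ≤ C * t ^ (-(1 : ℝ) / 2) * (1 + |Real.log t|) ^ (-n)) :
    ∫ t in Ioi (0 : ℝ),
        (∫ s in Ioi (0 : ℝ), (hankelLogKernelR K p (t + s) : ℂ) * f₁ s) * conj (f₂ t)
      = ∫ t in Ioi (0 : ℝ),
          f₁ t * conj (∫ s in Ioi (0 : ℝ), (hankelLogKernelR K p (t + s) : ℂ) * f₂ s) := by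
  have hker : Measurable (hankelLogKernelR K p) := by
    unfold hankelLogKernelR
    exact (Finset.measurable_sum _ fun k _ =>
      (measurable_const.mul (Real.measurable_log.pow_const k))).div measurable_id
  have hFmeas : Measurable (fun z : ℝ × ℝ =>
      (hankelLogKernelR K p (z.1 + z.2) : ℂ) * f₁ z.2 * conj (f₂ z.1)) := by
    refine Measurable.mul (Measurable.mul ?_ (hf₁.comp measurable_snd)) ?_
    · exact Complex.measurable_ofReal.comp (hker.comp (measurable_fst.add measurable_snd))
    · exact Complex.continuous_conj.measurable.comp (hf₂.comp measurable_fst)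
  -- the dominating function
  set G : ℝ × ℝ → ℝ := fun z => ∑ k ∈ Finset.range (K+1),
      |p k| * C^2 * ((z.1⁻¹ * (1 + |Real.log z.1|) ^ ((k:ℝ) - n)) *
        (z.2⁻¹ * (1 + |Real.log z.2|) ^ ((k:ℝ) - n))) with hGdef
  have hG : Integrable G
      ((volume.restrict (Ioi (0:ℝ))).prod (volume.restrict (Ioi (0:ℝ)))) := by
    apply integrable_finset_sum
    intro k hk
    have hkK : (k:ℝ) ≤ K := Nat.cast_le.mpr (Nat.lt_succ_iff.mp (Finset.mem_range.mp hk))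
    have h1 : ((k:ℝ) - n) < -1 := by linarith
    exact ((aux_integrable h1).mul_prod (aux_integrable h1)).const_mul _
  have key : Integrable (fun z : ℝ × ℝ =>
      (hankelLogKernelR K p (z.1 + z.2) : ℂ) * f₁ z.2 * conj (f₂ z.1))
      ((volume.restrict (Ioi (0:ℝ))).prod (volume.restrict (Ioi (0:ℝ)))) := by
    refine hG.mono' hFmeas.aestronglyMeasurable ?_
    rw [Measure.prod_restrict, ae_restrict_iff' (measurableSet_Ioi.prod measurableSet_Ioi)]
    refine Filter.Eventually.of_forall ?_
    rintro ⟨t, s⟩ ⟨ht, hs⟩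
    simp only [mem_Ioi] at ht hs
    have hts : 0 < t + s := by linarith
    have hnorm : ‖(↑(hankelLogKernelR K p (t + s)) : ℂ) * f₁ s * conj (f₂ t)‖
        = |hankelLogKernelR K p (t + s)| * ‖f₁ s‖ * ‖f₂ t‖ := by
      simp [norm_mul, Complex.norm_real, RCLike.norm_conj, Real.norm_eq_abs]
    rw [hnorm]
    have hb1 := hbound₁ s hs
    have hb2 := hbound₂ t ht
    have hg1 : (0:ℝ) ≤ C * s ^ (-(1:ℝ)/2) * (1 + |Real.log s|) ^ (-n) :=
      le_trans (norm_nonneg _) hb1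
    have hg2 : (0:ℝ) ≤ C * t ^ (-(1:ℝ)/2) * (1 + |Real.log t|) ^ (-n) :=
      le_trans (norm_nonneg _) hb2
    have hkb : |hankelLogKernelR K p (t + s)|
        ≤ ∑ k ∈ Finset.range (K+1), |p k| * |Real.log (t + s)| ^ k * (t + s)⁻¹ := by
      unfold hankelLogKernelR
      rw [abs_div, abs_of_pos hts, div_eq_mul_inv, ← Finset.sum_mul]
      refine mul_le_mul_of_nonneg_right ?_ (inv_nonneg.mpr hts.le)
      calc |∑ k ∈ Finset.range (K+1), p k * Real.log (t + s) ^ k|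
          ≤ ∑ k ∈ Finset.range (K+1), |p k * Real.log (t + s) ^ k| :=
            Finset.abs_sum_le_sum_abs _ _
        _ = ∑ k ∈ Finset.range (K+1), |p k| * |Real.log (t + s)| ^ k := by
            simp [abs_mul, abs_pow]
    calc |hankelLogKernelR K p (t + s)| * ‖f₁ s‖ * ‖f₂ t‖
        ≤ (∑ k ∈ Finset.range (K+1), |p k| * |Real.log (t + s)| ^ k * (t + s)⁻¹) *
            (C * s ^ (-(1:ℝ)/2) * (1 + |Real.log s|) ^ (-n)) *
            (C * t ^ (-(1:ℝ)/2) * (1 + |Real.log t|) ^ (-n)) := by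
          apply mul_le_mul
          · exact mul_le_mul hkb hb1 (norm_nonneg _)
              (Finset.sum_nonneg fun k _ => by positivity)
          · exact hb2
          · exact norm_nonneg _
          · exact mul_nonneg (Finset.sum_nonneg fun k _ => by positivity) hg1
      _ = ∑ k ∈ Finset.range (K+1), |p k| * (|Real.log (t + s)| ^ k * (t + s)⁻¹ *
            ((C * s ^ (-(1:ℝ)/2) * (1 + |Real.log s|) ^ (-n)) *
              (C * t ^ (-(1:ℝ)/2) * (1 + |Real.log t|) ^ (-n)))) := by
          rw [Finset.sum_mul, Finset.sum_mul]
          exact Finset.sum_congr rfl fun k _ => by ring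
      _ ≤ G (t, s) := by
          rw [hGdef]
          refine Finset.sum_le_sum fun k _ => ?_
          have := term_bound (C := C) (n := n) ht hs k
          calc |p k| * (|Real.log (t + s)| ^ k * (t + s)⁻¹ *
                ((C * s ^ (-(1:ℝ)/2) * (1 + |Real.log s|) ^ (-n)) *
                  (C * t ^ (-(1:ℝ)/2) * (1 + |Real.log t|) ^ (-n))))
              ≤ |p k| * (C ^ 2 * ((t⁻¹ * (1 + |Real.log t|) ^ ((k:ℝ) - n)) *
                  (s⁻¹ * (1 + |Real.log s|) ^ ((k:ℝ) - n)))) :=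
                mul_le_mul_of_nonneg_left this (abs_nonneg _)
            _ = |p k| * C^2 * ((t⁻¹ * (1 + |Real.log t|) ^ ((k:ℝ) - n)) *
                  (s⁻¹ * (1 + |Real.log s|) ^ ((k:ℝ) - n))) := by ring
  -- now the Fubini argument
  calc ∫ t in Ioi (0:ℝ),
        (∫ s in Ioi (0:ℝ), (hankelLogKernelR K p (t + s) : ℂ) * f₁ s) * conj (f₂ t)
      = ∫ t in Ioi (0:ℝ), ∫ s in Ioi (0:ℝ),
          (hankelLogKernelR K p (t + s) : ℂ) * f₁ s * conj (f₂ t) := by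
        refine integral_congr_ae (Filter.Eventually.of_forall fun t => ?_)
        dsimp only
        rw [← integral_mul_const]
    _ = ∫ s in Ioi (0:ℝ), ∫ t in Ioi (0:ℝ),
          (hankelLogKernelR K p (t + s) : ℂ) * f₁ s * conj (f₂ t) :=
        integral_integral_swap key
    _ = ∫ t in Ioi (0:ℝ),
          f₁ t * conj (∫ s in Ioi (0:ℝ), (hankelLogKernelR K p (t + s) : ℂ) * f₂ s) := by
        refine integral_congr_ae (Filter.Eventually.of_forall fun s => ?_)
        dsimp only
        rw [← integral_conj, ← integral_const_mul]
        refine integral_congr_ae (Filter.Eventually.of_forall fun t => ?_)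
        dsimp only
        rw [map_mul, Complex.conj_ofReal, add_comm s t]
        ring
end

section
/- Let P(x) = Σ_{k=0}^K p_k x^k be a complex polynomial, ω(z) = 1/Γ(1−z), q_k = Σ_{ℓ=k}^K binom(ℓ,k) ω^{(ℓ−k)}(0) p_ℓ, and Q(x) = Σ_{k=0}^K q_k x^k. Then for every t > 0, P(ln t) = t ∫_0^∞ Q(−ln λ) e^{−tλ} dλ (the integral converging absolutely). -/
open Set

/-- `ω(z) = 1/Γ(1−z)`. -/
noncomputable def omegaGamma : ℂ → ℂ := fun z => (Complex.Gamma (1 - z))⁻¹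

/-!
For `t > 0` and `re z < 1` the Gamma integral gives
`t ∫₀^∞ λ^(-z) e^(-tλ) dλ = Γ(1 - z) t^z`, i.e. `t^z = t M(z) ω(z)` with `M(z)` the Mellin
transform of `e^(-tλ)` at `1 - z`. Differentiating `n` times at `z = 0` by the Leibniz rule, and
differentiating the Mellin transform under the integral sign (each derivative brings down a
factor `-log λ`), expresses `(log t)^n` as `∑ₖ C(n,k) ω^(n-k)(0) t ∫ (-log λ)^k e^(-tλ) dλ`.
Summing against the `p_n` and exchanging the two sums gives the formula with the `q_k`.
-/

open MeasureTheory Filter Asymptotics Real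
open scoped Topology

/-- The Mellin transform of `f` converges, and is holomorphic, on the strip `b < re s < a`. -/
def HasMellinStrip {E : Type*} [NormedAddCommGroup E] (f : ℝ → E) (b a : ℝ) : Prop :=
  LocallyIntegrableOn f (Ioi 0) ∧ (∀ a' < a, f =O[atTop] (· ^ (-a'))) ∧
    ∀ b' > b, f =O[𝓝[>] 0] (· ^ (-b'))

namespace HasMellinStrip

variable {E : Type*} [NormedAddCommGroup E] [NormedSpace ℂ E] {f : ℝ → E} {b a : ℝ} {s : ℂ}

theorem log_smul (hf : HasMellinStrip f b a) : HasMellinStrip (fun x => log x • f x) b a := by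
  obtain ⟨hfc, hf_top, hf_bot⟩ := hf
  refine ⟨hfc.continuousOn_smul isOpen_Ioi.isLocallyClosed
      (continuousOn_log.mono fun x hx => ne_of_gt hx), fun a' ha' => ?_, fun b' hb' => ?_⟩
  · exact isBigO_rpow_top_log_smul (by linarith) (hf_top ((a' + a) / 2) (by linarith))
  · exact isBigO_rpow_zero_log_smul (by linarith) (hf_bot ((b + b') / 2) (by linarith))

theorem log_pow_smul (hf : HasMellinStrip f b a) (k : ℕ) :
    HasMellinStrip (fun x => log x ^ k • f x) b a := by
  induction k with
  | zero => simpa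
  | succ k ih => simpa only [pow_succ', mul_smul] using ih.log_smul

theorem mellinConvergent (hf : HasMellinStrip f b a) (hb : b < s.re) (ha : s.re < a) :
    MellinConvergent f s :=
  mellinConvergent_of_isBigO_rpow hf.1 (hf.2.1 ((s.re + a) / 2) (by linarith)) (by linarith)
    (hf.2.2 ((b + s.re) / 2) (by linarith)) (by linarith)

theorem hasDerivAt_mellin (hf : HasMellinStrip f b a) (hb : b < s.re) (ha : s.re < a) :
    HasDerivAt (mellin f) (mellin (fun x => log x • f x) s) s :=
  (mellin_hasDerivAt_of_isBigO_rpow hf.1 (hf.2.1 ((s.re + a) / 2) (by linarith)) (by linarith)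
    (hf.2.2 ((b + s.re) / 2) (by linarith)) (by linarith)).2

theorem iteratedDeriv_mellin (hf : HasMellinStrip f b a) (hb : b < s.re) (ha : s.re < a)
    (k : ℕ) : iteratedDeriv k (mellin f) s = mellin (fun x => log x ^ k • f x) s := by
  induction k generalizing f with
  | zero => simp
  | succ k ih =>
    have hderiv : EqOn (deriv (mellin f)) (mellin fun x => log x • f x)
        (Complex.re ⁻¹' Ioo b a) := fun z hz => (hf.hasDerivAt_mellin hz.1 hz.2).deriv
    rw [iteratedDeriv_succ',
      hderiv.iteratedDeriv_of_isOpen (isOpen_Ioo.preimage Complex.continuous_re) k ⟨hb, ha⟩,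
      ih hf.log_smul]
    simp_rw [smul_smul, pow_succ]

end HasMellinStrip

theorem hasMellinStrip_exp_neg_mul {t : ℝ} (ht : 0 < t) (a : ℝ) :
    HasMellinStrip (fun x : ℝ => Complex.exp (-((t * x : ℝ) : ℂ))) 0 a := by
  have hcont : Continuous fun x : ℝ => Complex.exp (-((t * x : ℝ) : ℂ)) := by fun_prop
  refine ⟨hcont.continuousOn.locallyIntegrableOn measurableSet_Ioi, fun a' _ => ?_,
    fun b' hb' => ?_⟩
  · refine IsBigO.of_norm_left ?_
    simpa only [Complex.norm_exp, Complex.neg_re, Complex.ofReal_re, neg_mul] using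
      (isLittleO_exp_neg_mul_rpow_atTop ht (-a')).isBigO
  · have hbounded :
        (fun x : ℝ => Complex.exp (-((t * x : ℝ) : ℂ))) =O[𝓝[>] 0] fun _ => (1 : ℝ) :=
      ((hcont.tendsto 0).mono_left nhdsWithin_le_nhds).isBigO_one ℝ
    refine hbounded.trans ((isBigO_const_left_iff_pos_le_norm one_ne_zero).2 ⟨1, one_pos, ?_⟩)
    filter_upwards [(tendsto_rpow_neg_nhdsGT_zero (neg_lt_zero.2 hb')).eventually_ge_atTop 1]
      with x hx using hx.trans (le_abs_self _)

theorem integrableOn_neg_log_pow_smul_exp_neg_mul {t : ℝ} (ht : 0 < t) (k : ℕ) :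
    IntegrableOn (fun x : ℝ => (-log x) ^ k • Complex.exp (-((t * x : ℝ) : ℂ))) (Ioi 0) := by
  have h := (((hasMellinStrip_exp_neg_mul ht 2).log_pow_smul k).mellinConvergent
    (s := 1) (by simp) (by simp)).smul ((-1 : ℝ) ^ k)
  refine IntegrableOn.congr_fun h (fun x _ => ?_) measurableSet_Ioi
  simp only [sub_self, Complex.cpow_zero, one_smul, Pi.smul_apply, smul_smul, ← mul_pow,
    neg_one_mul]

theorem mellin_exp_neg_mul {t : ℝ} (ht : 0 < t) {s : ℂ} (hs : 0 < s.re) :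
    mellin (fun x : ℝ => Complex.exp (-((t * x : ℝ) : ℂ))) s
      = (1 / t) ^ s * Complex.Gamma s := by
  simpa [mellin] using Complex.integral_cpow_mul_exp_neg_mul_Ioi hs ht

theorem mul_mellin_exp_neg_mul_one_sub_mul_omegaGamma {t : ℝ} (ht : 0 < t) {z : ℂ}
    (hz : z.re < 1) :
    (t : ℂ) * mellin (fun x : ℝ => Complex.exp (-((t * x : ℝ) : ℂ))) (1 - z) * omegaGamma z
      = (t : ℂ) ^ z := by
  have hre : 0 < (1 - z).re := by simpa using hz
  have ht' : (t : ℂ) ≠ 0 := Complex.ofReal_ne_zero.2 ht.ne'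
  rw [mellin_exp_neg_mul ht hre, omegaGamma, one_div,
    Complex.inv_cpow _ _ (by simp [Complex.arg_ofReal_of_nonneg ht.le, Real.pi_ne_zero.symm]),
    Complex.cpow_sub _ _ ht', Complex.cpow_one]
  field_simp [Complex.Gamma_ne_zero_of_re_pos hre, ht', Complex.cpow_ne_zero_iff]

theorem iteratedDeriv_const_cpow {c : ℂ} (hc : c ≠ 0) (n : ℕ) :
    iteratedDeriv n (fun z : ℂ => c ^ z) = fun z => Complex.log c ^ n * c ^ z := by
  simp only [Complex.cpow_def_of_ne_zero hc, iteratedDeriv_cexp_const_mul]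

theorem contDiff_omegaGamma {n : WithTop ℕ∞} : ContDiff ℂ n omegaGamma :=
  (Complex.differentiable_one_div_Gamma.comp (differentiable_id.const_sub 1)).contDiff

theorem log_pow_eq_sum {t : ℝ} (ht : 0 < t) (n : ℕ) :
    (log t : ℂ) ^ n = ∑ k ∈ Finset.range (n + 1), (n.choose k : ℂ) *
      iteratedDeriv (n - k) omegaGamma 0 *
        ((t : ℂ) * ∫ x in Ioi (0 : ℝ), (-log x) ^ k • Complex.exp (-((t * x : ℝ) : ℂ))) := by
  set f := fun x : ℝ => Complex.exp (-((t * x : ℝ) : ℂ))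
  set M := fun z : ℂ => mellin f (1 - z)
  have hf := hasMellinStrip_exp_neg_mul ht
  have hhalfPlane : Complex.re ⁻¹' Iio 1 ∈ 𝓝 (0 : ℂ) :=
    (isOpen_Iio.preimage Complex.continuous_re).mem_nhds (by simp)
  have hM : ∀ k, iteratedDeriv k M 0 = ∫ x in Ioi (0 : ℝ), (-log x) ^ k • f x := by
    intro k
    rw [iteratedDeriv_comp_const_sub]
    beta_reduce
    rw [sub_zero, (hf 2).iteratedDeriv_mellin (by simp) (by simp)]
    simp only [mellin, sub_self, Complex.cpow_zero, one_smul, ← integral_smul]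
    refine setIntegral_congr_fun measurableSet_Ioi fun x _ => ?_
    simp only [Complex.real_smul, smul_eq_mul, Complex.ofReal_pow, Complex.ofReal_neg]
    rw [neg_pow]
    ring
  have hMsmooth : ContDiffAt ℂ n M 0 := by
    refine (DifferentiableOn.analyticAt (fun z hz => ?_) hhalfPlane).contDiffAt
    have hre : 0 < (1 - z).re := by simpa using hz
    exact (((hf ((1 - z).re + 1)).hasDerivAt_mellin hre (lt_add_one _)).comp z
      ((hasDerivAt_id z).const_sub 1)).differentiableAt.differentiableWithinAt
  have heq : (fun z => (t : ℂ) * M z * omegaGamma z) =ᶠ[𝓝 0] fun z => (t : ℂ) ^ z :=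
    eventually_of_mem hhalfPlane fun z hz => mul_mellin_exp_neg_mul_one_sub_mul_omegaGamma ht hz
  have hlog : (log t : ℂ) ^ n = iteratedDeriv n (fun z : ℂ => (t : ℂ) ^ z) 0 := by
    simp [iteratedDeriv_const_cpow (Complex.ofReal_ne_zero.2 ht.ne'), Complex.ofReal_log ht.le]
  rw [hlog, ← heq.iteratedDeriv_eq,
    iteratedDeriv_fun_mul (contDiffAt_const.mul hMsmooth) contDiff_omegaGamma.contDiffAt]
  refine Finset.sum_congr rfl fun k _ => ?_
  rw [iteratedDeriv_const_mul_field, hM]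
  ring

theorem Finset.sum_range_sum_range_succ_comm {M : Type*} [AddCommMonoid M] (K : ℕ)
    (F : ℕ → ℕ → M) :
    ∑ ℓ ∈ Finset.range (K + 1), ∑ k ∈ Finset.range (ℓ + 1), F ℓ k
      = ∑ k ∈ Finset.range (K + 1), ∑ ℓ ∈ Finset.Icc k K, F ℓ k :=
  Finset.sum_comm' fun ℓ k => by simp only [Finset.mem_range, Finset.mem_Icc]; omega

/-- The polynomial `P(x) = ∑ p_k x^k` is recovered from `Q(x) = ∑ q_k x^k`, where
`q_k = ∑_{ℓ=k}^K binom(ℓ,k) ω^{(ℓ−k)}(0) p_ℓ`, by the formula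
`P(ln t) = t ∫_0^∞ Q(−ln λ) e^{−tλ} dλ`, the integral converging absolutely. -/
theorem P_recovered_from_Q
    (K : ℕ) (p q : ℕ → ℂ)
    (hq : ∀ k, q k = ∑ ℓ ∈ Finset.Icc k K,
      (ℓ.choose k : ℂ) * iteratedDeriv (ℓ - k) omegaGamma 0 * p ℓ)
    (P Q : ℝ → ℂ)
    (hP : ∀ x : ℝ, P x = ∑ k ∈ Finset.range (K + 1), p k * (x : ℂ) ^ k)
    (hQ : ∀ x : ℝ, Q x = ∑ k ∈ Finset.range (K + 1), q k * (x : ℂ) ^ k)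
    (t : ℝ) (ht : 0 < t) :
    MeasureTheory.IntegrableOn
        (fun l : ℝ => Q (-Real.log l) * Complex.exp (-((t * l : ℝ) : ℂ))) (Ioi 0) ∧
      P (Real.log t)
        = (t : ℂ) * ∫ l in Ioi (0 : ℝ), Q (-Real.log l) * Complex.exp (-((t * l : ℝ) : ℂ)) := by
  set g : ℕ → ℝ → ℂ := fun k l => (-log l) ^ k • Complex.exp (-((t * l : ℝ) : ℂ))
  have hg := integrableOn_neg_log_pow_smul_exp_neg_mul ht
  have hQg : (fun l => Q (-log l) * Complex.exp (-((t * l : ℝ) : ℂ)))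
      = fun l => ∑ k ∈ Finset.range (K + 1), q k * g k l := by
    funext l
    simp only [hQ, Finset.sum_mul, g, Complex.real_smul, Complex.ofReal_pow, mul_assoc]
  rw [hQg]
  refine ⟨integrable_finsetSum _ fun k _ => (hg k).const_mul _, ?_⟩
  rw [integral_finsetSum _ fun k _ => (hg k).const_mul _, hP]
  simp_rw [integral_const_mul, log_pow_eq_sum ht, hq, Finset.sum_mul, Finset.mul_sum]
  rw [Finset.sum_range_sum_range_succ_comm]
  refine Finset.sum_congr rfl fun k _ => Finset.sum_congr rfl fun ℓ _ => ?_
  ring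
end

section
/- Let v ∈ C^1(ℝ) with v(ξ) > 0 for all ξ, and suppose ∫_0^∞ v(ξ)^{-2} dξ = ∫_{-∞}^0 v(ξ)^{-2} dξ = ∞. Let q_0, q_1 ∈ ℝ with q_1 ≠ 0, and define (T g)(ξ) = v(ξ)^{-1} e^{i q_0 q_1^{-1} ξ} g(∫_0^ξ v(η)^{-2} dη). Then T extends to a unitary operator on L^2(ℝ), and for every g ∈ C_c^1(ℝ) and every ξ ∈ ℝ: v(ξ)·[q_0 (v·Tg)(ξ) + q_1 i (v·Tg)'(ξ)] = i q_1 (T g')(ξ); i.e. the operator A_0 = v(q_0 + q_1 D)v satisfies A_0 T g = i q_1 T g'. -/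
/-!
With `φ ξ = ∫_0^ξ v⁻²`, the operator `T` is the weighted composition `g ↦ m · (g ∘ φ)` with
`|m|² = v⁻² = φ'`, so the substitution `y = φ ξ` shows that it preserves `L²` norms. Divergence
of `∫ v⁻²` at `±∞` makes `φ` a homeomorphism of `ℝ`, and the weighted composition with `φ⁻¹` and
weight `(m ∘ φ⁻¹)⁻¹` is an inverse. The intertwining relation is the chain rule:
`(v · T g)' = i (q₀ / q₁) · v · T g + v⁻¹ · T g'`.
-/

open MeasureTheory Real Set

/-- `(T g)(ξ) = v(ξ)⁻¹ e^{i q₀ q₁⁻¹ ξ} g(∫_0^ξ v(η)⁻² dη)`. -/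
noncomputable def Tmap (v : ℝ → ℝ) (q₀ q₁ : ℝ) (g : ℝ → ℂ) (ξ : ℝ) : ℂ :=
  ((v ξ)⁻¹ : ℝ) * Complex.exp (Complex.I * (q₀ / q₁ : ℝ) * ξ)
    * g (∫ η in (0 : ℝ)..ξ, ((v η) ^ 2)⁻¹)

open Filter
open scoped ENNReal

section Primitive

variable {w : ℝ → ℝ}

theorem monotone_integral_of_nonneg (hw : Continuous w) (hw0 : ∀ x, 0 ≤ w x) (a : ℝ) :
    Monotone fun ξ => ∫ η in a..ξ, w η :=
  monotone_of_deriv_nonneg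
    (fun x => (hw.integral_hasStrictDerivAt a x).hasDerivAt.differentiableAt)
    fun x => (hw.deriv_integral w a x) ▸ hw0 x

theorem strictMono_integral_of_pos (hw : Continuous w) (hw0 : ∀ x, 0 < w x) (a : ℝ) :
    StrictMono fun ξ => ∫ η in a..ξ, w η :=
  strictMono_of_deriv_pos fun x => (hw.deriv_integral w a x) ▸ hw0 x

theorem tendsto_integral_atTop_of_lintegral_Ioi_eq_top (hw : Continuous w) (hw0 : ∀ x, 0 ≤ w x)
    (a : ℝ) (htop : ∫⁻ x in Ioi a, ENNReal.ofReal (w x) = ⊤) :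
    Tendsto (fun ξ => ∫ η in a..ξ, w η) atTop atTop := by
  refine tendsto_atTop_atTop_of_monotone (monotone_integral_of_nonneg hw hw0 a) ?_
  by_contra! hbdd
  obtain ⟨C, hC⟩ := hbdd
  have hint : IntegrableOn w (Ioi a) :=
    integrableOn_Ioi_of_intervalIntegral_norm_bounded C a (fun _ => hw.integrableOn_Ioc)
      tendsto_id (Eventually.of_forall fun ξ => by
        simpa only [id, Real.norm_of_nonneg (hw0 _)] using (hC ξ).le)
  exact hint.lintegral_lt_top.ne htop

theorem tendsto_integral_atBot_of_lintegral_Iio_eq_top (hw : Continuous w) (hw0 : ∀ x, 0 ≤ w x)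
    (a : ℝ) (hbot : ∫⁻ x in Iio a, ENNReal.ofReal (w x) = ⊤) :
    Tendsto (fun ξ => ∫ η in a..ξ, w η) atBot atBot := by
  refine tendsto_atBot_atBot_of_monotone (monotone_integral_of_nonneg hw hw0 a) ?_
  by_contra! hbdd
  obtain ⟨C, hC⟩ := hbdd
  have hint : IntegrableOn w (Iic a) :=
    integrableOn_Iic_of_intervalIntegral_norm_bounded (-C) a (fun _ => hw.integrableOn_Ioc)
      tendsto_id (Eventually.of_forall fun ξ => by
        simp only [id, Real.norm_of_nonneg (hw0 _)]
        rw [intervalIntegral.integral_symm]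
        exact neg_le_neg (hC ξ).le)
  exact (hint.mono_set Iio_subset_Iic_self).lintegral_lt_top.ne hbot

noncomputable def primitiveHomeomorph (hw : Continuous w) (hw0 : ∀ x, 0 < w x)
    (htop : ∫⁻ x in Ioi 0, ENNReal.ofReal (w x) = ⊤)
    (hbot : ∫⁻ x in Iio 0, ENNReal.ofReal (w x) = ⊤) : ℝ ≃ₜ ℝ :=
  OrderIso.toHomeomorph <| StrictMono.orderIsoOfSurjective _ (strictMono_integral_of_pos hw hw0 0)
    (Continuous.surjective (intervalIntegral.continuous_primitive hw.intervalIntegrable 0)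
      (tendsto_integral_atTop_of_lintegral_Ioi_eq_top hw (fun x => (hw0 x).le) 0 htop)
      (tendsto_integral_atBot_of_lintegral_Iio_eq_top hw (fun x => (hw0 x).le) 0 hbot))

theorem hasDerivAt_primitiveHomeomorph (hw : Continuous w) (hw0 : ∀ x, 0 < w x)
    (htop : ∫⁻ x in Ioi 0, ENNReal.ofReal (w x) = ⊤)
    (hbot : ∫⁻ x in Iio 0, ENNReal.ofReal (w x) = ⊤) (x : ℝ) :
    HasDerivAt (primitiveHomeomorph hw hw0 htop hbot) (w x) x :=
  (hw.integral_hasStrictDerivAt 0 x).hasDerivAt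

end Primitive

section WeightedComposition

def weightedComp (m : ℝ → ℂ) (φ : ℝ → ℝ) : (ℝ → ℂ) →ₗ[ℂ] (ℝ → ℂ) where
  toFun g x := m x * g (φ x)
  map_add' _ _ := funext fun _ => mul_add _ _ _
  map_smul' _ _ := funext fun _ => mul_left_comm _ _ _

@[simp]
theorem weightedComp_apply (m : ℝ → ℂ) (φ : ℝ → ℝ) (g : ℝ → ℂ) (x : ℝ) :
    weightedComp m φ g x = m x * g (φ x) :=
  rfl

theorem Homeomorph.quasiMeasurePreserving_of_hasDerivAt_symm (φ : ℝ ≃ₜ ℝ) {ψ' : ℝ → ℝ}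
    (hψ : ∀ y, HasDerivAt φ.symm (ψ' y) y) : Measure.QuasiMeasurePreserving φ volume volume := by
  refine ⟨φ.measurable, .mk fun N hN hN0 => ?_⟩
  have hchange := lintegral_image_eq_lintegral_abs_deriv_mul hN
    (fun y _ => (hψ y).hasDerivWithinAt) φ.symm.injective.injOn 1
  rw [Measure.map_apply φ.measurable hN, ← φ.image_symm]
  simpa [setLIntegral_measure_zero _ _ hN0] using hchange

structure IsIsometricWeight (p : ℝ≥0∞) (φ : ℝ ≃ₜ ℝ) (φ' : ℝ → ℝ) (m : ℝ → ℂ) : Prop where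
  hasDerivAt : ∀ x, HasDerivAt φ (φ' x) x
  continuous : Continuous m
  ne_zero : ∀ x, m x ≠ 0
  norm_rpow : ∀ x, ‖m x‖ ^ p.toReal = |φ' x|

namespace IsIsometricWeight

variable {p : ℝ≥0∞} {φ : ℝ ≃ₜ ℝ} {φ' : ℝ → ℝ} {m : ℝ → ℂ}

theorem deriv_ne_zero (h : IsIsometricWeight p φ φ' m) (x : ℝ) : φ' x ≠ 0 :=
  abs_pos.mp (h.norm_rpow x ▸ rpow_pos_of_pos (norm_pos_iff.2 (h.ne_zero x)) _)

theorem hasDerivAt_symm (h : IsIsometricWeight p φ φ' m) (y : ℝ) :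
    HasDerivAt φ.symm (φ' (φ.symm y))⁻¹ y :=
  .of_local_left_inverse φ.symm.continuous.continuousAt (h.hasDerivAt _) (h.deriv_ne_zero _)
    (Eventually.of_forall φ.apply_symm_apply)

protected theorem symm (h : IsIsometricWeight p φ φ' m) :
    IsIsometricWeight p φ.symm (fun y => (φ' (φ.symm y))⁻¹) (fun y => (m (φ.symm y))⁻¹) where
  hasDerivAt := h.hasDerivAt_symm
  continuous := (h.continuous.comp φ.symm.continuous).inv₀ fun _ => h.ne_zero _
  ne_zero _ := inv_ne_zero (h.ne_zero _)
  norm_rpow y := by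
    rw [norm_inv, inv_rpow (norm_nonneg _), h.norm_rpow, abs_inv]

theorem quasiMeasurePreserving (h : IsIsometricWeight p φ φ' m) :
    Measure.QuasiMeasurePreserving φ volume volume :=
  φ.quasiMeasurePreserving_of_hasDerivAt_symm h.hasDerivAt_symm

theorem lintegral_enorm_rpow (h : IsIsometricWeight p φ φ' m) (g : ℝ → ℂ) :
    ∫⁻ x, ‖weightedComp m φ g x‖ₑ ^ p.toReal = ∫⁻ y, ‖g y‖ₑ ^ p.toReal := by
  have hchange := lintegral_image_eq_lintegral_abs_deriv_mul MeasurableSet.univ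
    (fun x _ => (h.hasDerivAt x).hasDerivWithinAt) φ.injective.injOn
    (fun y => ‖g y‖ₑ ^ p.toReal)
  rw [image_univ, φ.range_coe, Measure.restrict_univ] at hchange
  rw [hchange]
  congr 1 with x
  rw [weightedComp_apply, enorm_mul, ENNReal.mul_rpow_of_nonneg _ _ ENNReal.toReal_nonneg,
    ← h.norm_rpow x, ← ofReal_norm, ENNReal.ofReal_rpow_of_nonneg (norm_nonneg _)
      ENNReal.toReal_nonneg]

theorem eLpNorm_weightedComp (h : IsIsometricWeight p φ φ' m) (hp : p ≠ ∞) (g : ℝ → ℂ) :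
    eLpNorm (weightedComp m φ g) p volume = eLpNorm g p volume := by
  rcases eq_or_ne p 0 with rfl | hp0
  · simp only [eLpNorm_exponent_zero]
  simp only [eLpNorm_eq_lintegral_rpow_enorm_toReal hp0 hp, h.lintegral_enorm_rpow]

theorem memLp_weightedComp (h : IsIsometricWeight p φ φ' m) (hp : p ≠ ∞)
    {g : ℝ → ℂ} (hg : MemLp g p volume) : MemLp (weightedComp m φ g) p volume :=
  ⟨h.continuous.aestronglyMeasurable.mul
      (hg.1.comp_quasiMeasurePreserving h.quasiMeasurePreserving),
    h.eLpNorm_weightedComp hp g ▸ hg.2⟩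

theorem weightedComp_ae_congr (h : IsIsometricWeight p φ φ' m) {f g : ℝ → ℂ}
    (hfg : f =ᵐ[volume] g) : weightedComp m φ f =ᵐ[volume] weightedComp m φ g := by
  filter_upwards [h.quasiMeasurePreserving.ae_eq_comp hfg] with x hx
  simp only [weightedComp_apply, Function.comp_apply] at hx ⊢
  rw [hx]

theorem weightedComp_weightedComp_symm (h : IsIsometricWeight p φ φ' m) (g : ℝ → ℂ) :
    weightedComp m φ (weightedComp (fun y => (m (φ.symm y))⁻¹) φ.symm g) = g := by
  funext x
  simp [mul_inv_cancel_left₀ (h.ne_zero x)]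

variable [Fact (1 ≤ p)]

noncomputable def toLinearIsometry (h : IsIsometricWeight p φ φ' m) (hp : p ≠ ∞) :
    Lp ℂ p (volume : Measure ℝ) →ₗᵢ[ℂ] Lp ℂ p (volume : Measure ℝ) where
  toFun f := (h.memLp_weightedComp hp (Lp.memLp f)).toLp _
  map_add' f g := by
    rw [← MemLp.toLp_add]
    refine MemLp.toLp_congr _ _ ((h.weightedComp_ae_congr (Lp.coeFn_add f g)).trans ?_)
    rw [map_add]
  map_smul' c f := by
    rw [RingHom.id_apply, ← MemLp.toLp_const_smul]
    refine MemLp.toLp_congr _ _ ((h.weightedComp_ae_congr (Lp.coeFn_smul c f)).trans ?_)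
    rw [map_smul]
  norm_map' f := by
    rw [LinearMap.coe_mk, AddHom.coe_mk, Lp.norm_toLp, h.eLpNorm_weightedComp hp,
      Lp.norm_def]

theorem toLinearIsometry_toLp (h : IsIsometricWeight p φ φ' m) (hp : p ≠ ∞) {g : ℝ → ℂ}
    (hg : MemLp g p volume) :
    h.toLinearIsometry hp (hg.toLp g) =
      (h.memLp_weightedComp hp hg).toLp (weightedComp m φ g) :=
  MemLp.toLp_congr (h.memLp_weightedComp hp (Lp.memLp _)) _
    (h.weightedComp_ae_congr hg.coeFn_toLp)

theorem toLinearIsometry_surjective (h : IsIsometricWeight p φ φ' m) (hp : p ≠ ∞) :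
    Function.Surjective (h.toLinearIsometry hp) := fun f => by
  have hg := h.symm.memLp_weightedComp hp (Lp.memLp f)
  refine ⟨hg.toLp _, ?_⟩
  rw [toLinearIsometry_toLp]
  exact (MemLp.toLp_congr _ (Lp.memLp f) (by rw [h.weightedComp_weightedComp_symm])).trans
    (Lp.toLp_coeFn f _)

noncomputable def toLinearIsometryEquiv (h : IsIsometricWeight p φ φ' m) (hp : p ≠ ∞) :
    Lp ℂ p (volume : Measure ℝ) ≃ₗᵢ[ℂ] Lp ℂ p (volume : Measure ℝ) :=
  .ofSurjective _ (h.toLinearIsometry_surjective hp)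

theorem toLinearIsometryEquiv_toLp (h : IsIsometricWeight p φ φ' m) (hp : p ≠ ∞) {g : ℝ → ℂ}
    (hg : MemLp g p volume) :
    h.toLinearIsometryEquiv hp (hg.toLp g) =
      (h.memLp_weightedComp hp hg).toLp (weightedComp m φ g) :=
  h.toLinearIsometry_toLp hp hg

end IsIsometricWeight

end WeightedComposition

section Tmap

variable {v : ℝ → ℝ}

theorem isIsometricWeight_two_inv_mul_exp (hv : Continuous v) (hv0 : ∀ x, v x ≠ 0) {φ : ℝ ≃ₜ ℝ}
    (hφ : ∀ x, HasDerivAt φ ((v x ^ 2)⁻¹) x) (θ : ℝ) :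
    IsIsometricWeight 2 φ (fun x => (v x ^ 2)⁻¹)
      (fun x => ((v x)⁻¹ : ℝ) * Complex.exp (Complex.I * θ * x)) where
  hasDerivAt := hφ
  continuous := by fun_prop (disch := exact hv0 _)
  ne_zero x := mul_ne_zero (by simpa using hv0 x) (Complex.exp_ne_zero _)
  norm_rpow x := by
    simp [Complex.norm_exp, inv_pow]

theorem hasDerivAt_ofReal_mul_Tmap (hv : Continuous v) (hv0 : ∀ x, v x ≠ 0) (q₀ q₁ : ℝ)
    {g : ℝ → ℂ} {ξ : ℝ} (hg : DifferentiableAt ℝ g (∫ η in (0 : ℝ)..ξ, ((v η) ^ 2)⁻¹)) :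
    HasDerivAt (fun η => (v η : ℂ) * Tmap v q₀ q₁ g η)
      (Complex.I * (q₀ / q₁ : ℝ) * ((v ξ : ℂ) * Tmap v q₀ q₁ g ξ)
        + (v ξ : ℂ)⁻¹ * Tmap v q₀ q₁ (deriv g) ξ) ξ := by
  set θ : ℂ := Complex.I * (q₀ / q₁ : ℝ)
  have hw : Continuous fun η => ((v η) ^ 2)⁻¹ := (hv.pow 2).inv₀ fun η => pow_ne_zero 2 (hv0 η)
  have hφ := (hw.integral_hasStrictDerivAt 0 ξ).hasDerivAt
  have he : HasDerivAt (fun x : ℝ => Complex.exp (θ * x)) (Complex.exp (θ * ξ) * θ) ξ := by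
    simpa using ((hasDerivAt_id ξ).ofReal_comp.const_mul θ).cexp
  have hfun : (fun η => (v η : ℂ) * Tmap v q₀ q₁ g η)
      = fun η : ℝ => Complex.exp (θ * η) * g (∫ t in (0 : ℝ)..η, ((v t) ^ 2)⁻¹) := by
    funext η
    have : (v η : ℂ) ≠ 0 := by exact_mod_cast hv0 η
    simp only [Tmap, θ]
    push_cast
    field_simp
  have hprod :
      HasDerivAt (fun η : ℝ => Complex.exp (θ * η) * g (∫ t in (0 : ℝ)..η, ((v t) ^ 2)⁻¹))
        (Complex.exp (θ * ξ) * θ * g (∫ t in (0 : ℝ)..ξ, ((v t) ^ 2)⁻¹)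
          + Complex.exp (θ * ξ) * ((v ξ ^ 2)⁻¹ • deriv g (∫ t in (0 : ℝ)..ξ, ((v t) ^ 2)⁻¹))) ξ :=
    he.mul (hg.hasDerivAt.scomp ξ hφ)
  rw [hfun]
  convert hprod using 1
  have : (v ξ : ℂ) ≠ 0 := by exact_mod_cast hv0 ξ
  simp only [Tmap, θ, Complex.real_smul]
  push_cast
  field_simp

end Tmap

/-- If `v ∈ C¹`, `v > 0` and `∫_0^∞ v⁻² = ∫_{-∞}^0 v⁻² = ∞`, then `T` extends to a unitary
operator on `L²(ℝ)` and intertwines `A₀ = v (q₀ + q₁ D) v` with `i q₁ d/dξ`: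
`A₀ T g = i q₁ T g'` for `g ∈ C_c¹(ℝ)`. -/
theorem Tmap_unitary_and_intertwines
    (v : ℝ → ℝ) (hv : ContDiff ℝ 1 v) (hvpos : ∀ ξ, 0 < v ξ)
    (hdivp : ∫⁻ ξ in Ioi (0 : ℝ), ENNReal.ofReal (((v ξ) ^ 2)⁻¹) = ⊤)
    (hdivm : ∫⁻ ξ in Iio (0 : ℝ), ENNReal.ofReal (((v ξ) ^ 2)⁻¹) = ⊤)
    (q₀ q₁ : ℝ) (hq₁ : q₁ ≠ 0) :
    (∃ 𝒯 : Lp ℂ 2 (volume : Measure ℝ) ≃ₗᵢ[ℂ] Lp ℂ 2 (volume : Measure ℝ),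
      ∀ (g : ℝ → ℂ) (hg : MemLp g 2 (volume : Measure ℝ)),
        ∃ hTg : MemLp (Tmap v q₀ q₁ g) 2 (volume : Measure ℝ),
          𝒯 (hg.toLp g) = hTg.toLp (Tmap v q₀ q₁ g)) ∧
    (∀ g : ℝ → ℂ, ContDiff ℝ 1 g → HasCompactSupport g → ∀ ξ : ℝ,
      (v ξ : ℂ) *
          ((q₀ : ℂ) * ((v ξ : ℂ) * Tmap v q₀ q₁ g ξ)
            + (q₁ : ℂ) * Complex.I * deriv (fun η => (v η : ℂ) * Tmap v q₀ q₁ g η) ξ)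
        = Complex.I * (q₁ : ℂ) * Tmap v q₀ q₁ (deriv g) ξ) := by
  have hvc : Continuous v := hv.continuous
  have hv0 : ∀ ξ, v ξ ≠ 0 := fun ξ => (hvpos ξ).ne'
  have hw : Continuous fun η => ((v η) ^ 2)⁻¹ := (hvc.pow 2).inv₀ fun η => pow_ne_zero 2 (hv0 η)
  have hw0 : ∀ η, 0 < ((v η) ^ 2)⁻¹ := fun η => inv_pos.2 (pow_pos (hvpos η) 2)
  have hT := isIsometricWeight_two_inv_mul_exp hvc hv0
    (hasDerivAt_primitiveHomeomorph hw hw0 hdivp hdivm) (q₀ / q₁)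
  -- `Tmap v q₀ q₁` is definitionally `weightedComp` with the weight of `hT`.
  refine ⟨⟨hT.toLinearIsometryEquiv ENNReal.ofNat_ne_top, fun g hg =>
    ⟨hT.memLp_weightedComp ENNReal.ofNat_ne_top hg,
      hT.toLinearIsometryEquiv_toLp ENNReal.ofNat_ne_top hg⟩⟩, fun g hg _ ξ => ?_⟩
  rw [(hasDerivAt_ofReal_mul_Tmap hvc hv0 q₀ q₁ (hg.differentiable one_ne_zero _)).deriv]
  have : (v ξ : ℂ) ≠ 0 := by exact_mod_cast hv0 ξ
  have : (q₁ : ℂ) ≠ 0 := by exact_mod_cast hq₁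
  push_cast
  field_simp
  ring_nf
  rw [Complex.I_sq]
  ring
end

section
/- Let v ∈ C^1(ℝ) be bounded with v(ξ) > 0 for all ξ, and suppose |v'(ξ)| ≤ C_0 v(ξ) for all ξ and some constant C_0. Then there exists b_0 > 0 such that for every real b with |b| ≥ b_0 and every u ∈ C_c^∞(ℝ): ∫_ℝ v(ξ)^2 |u(ξ)|^2 dξ ≤ ∫_ℝ v(ξ)^2 |u'(ξ) − b u(ξ)|^2 dξ. -/
open MeasureTheory Real Set

/-- Integral of the derivative of a `C¹` compactly supported function is zero. -/
lemma integral_deriv_eq_zero_aux (f : ℝ → ℝ) (hf : ContDiff ℝ 1 f)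
    (h2f : HasCompactSupport f) : ∫ x : ℝ, deriv f x = 0 := by
  have hint : Integrable (deriv f) :=
    (hf.continuous_deriv le_rfl).integrable_of_hasCompactSupport h2f.deriv
  have h1 := h2f.integral_Iic_deriv_eq hf 0
  have h2 := h2f.integral_Ioi_deriv_eq hf 0
  rw [← intervalIntegral.integral_Iic_add_Ioi (b := 0) hint.integrableOn hint.integrableOn, h1, h2]
  ring

lemma norm_sq_complex (z : ℂ) : ‖z‖ ^ 2 = z.re ^ 2 + z.im ^ 2 := by
  rw [Complex.sq_norm, Complex.normSq_apply]; ring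

/-- If `v ∈ C¹` is bounded and positive with `|v'| ≤ C₀ v`, then there is `b₀ > 0` such that
for every real `b` with `|b| ≥ b₀` and every `u ∈ C_c^∞(ℝ)`,
`∫ v² |u|² ≤ ∫ v² |u' − b u|²`. -/
theorem weighted_resolvent_estimate
    (v : ℝ → ℝ) (hv : ContDiff ℝ 1 v) (hvbdd : ∃ M : ℝ, ∀ ξ, v ξ ≤ M)
    (hvpos : ∀ ξ, 0 < v ξ)
    (C₀ : ℝ) (hv' : ∀ ξ, |deriv v ξ| ≤ C₀ * v ξ) :
    ∃ b₀ : ℝ, 0 < b₀ ∧ ∀ b : ℝ, b₀ ≤ |b| →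
      ∀ u : ℝ → ℂ, ContDiff ℝ (⊤ : ℕ∞) u → HasCompactSupport u →
        ∫ ξ : ℝ, (v ξ) ^ 2 * ‖u ξ‖ ^ 2
          ≤ ∫ ξ : ℝ, (v ξ) ^ 2 * ‖deriv u ξ - (b : ℂ) * u ξ‖ ^ 2 := by
  have hC₀ : 0 ≤ C₀ := by
    have h0 := hv' 0
    have h1 := hvpos 0
    nlinarith [abs_nonneg (deriv v 0)]
  refine ⟨2 * C₀ + 1, by linarith, ?_⟩
  intro b hb u hu hcu
  -- real and imaginary parts
  set p : ℝ → ℝ := fun ξ => (u ξ).re with hpdef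
  set q : ℝ → ℝ := fun ξ => (u ξ).im with hqdef
  have hu1 : ContDiff ℝ 1 u := hu.of_le (by simp)
  have hud : ∀ ξ, HasDerivAt u (deriv u ξ) ξ :=
    fun ξ => (hu1.differentiable one_ne_zero ξ).hasDerivAt
  have hpd : ∀ ξ, HasDerivAt p ((deriv u ξ).re) ξ :=
    fun ξ => (Complex.reCLM.hasFDerivAt.comp_hasDerivAt ξ (hud ξ))
  have hqd : ∀ ξ, HasDerivAt q ((deriv u ξ).im) ξ :=
    fun ξ => (Complex.imCLM.hasFDerivAt.comp_hasDerivAt ξ (hud ξ))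
  have hpc : ContDiff ℝ 1 p := Complex.reCLM.contDiff.comp hu1
  have hqc : ContDiff ℝ 1 q := Complex.imCLM.contDiff.comp hu1
  have hvd : ∀ ξ, HasDerivAt v (deriv v ξ) ξ :=
    fun ξ => (hv.differentiable one_ne_zero ξ).hasDerivAt
  -- the integrand pieces
  set F1 : ℝ → ℝ := fun ξ => v ξ ^ 2 * ‖deriv u ξ‖ ^ 2 with hF1def
  set F2 : ℝ → ℝ := fun ξ =>
    v ξ ^ 2 * (2 * (p ξ * (deriv u ξ).re + q ξ * (deriv u ξ).im)) with hF2def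
  set F3 : ℝ → ℝ := fun ξ => v ξ ^ 2 * ‖u ξ‖ ^ 2 with hF3def
  set F4 : ℝ → ℝ := fun ξ => (2 * v ξ * deriv v ξ) * (p ξ ^ 2 + q ξ ^ 2) with hF4def
  -- compact supports
  have hcsq : HasCompactSupport (fun ξ => p ξ ^ 2 + q ξ ^ 2) :=
    hcu.comp_left (g := fun z : ℂ => z.re ^ 2 + z.im ^ 2) (by simp)
  have hcsF1 : HasCompactSupport F1 :=
    HasCompactSupport.mul_left (hcu.deriv.comp_left (g := fun z : ℂ => ‖z‖ ^ 2) (by simp))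
  have hcsF2 : HasCompactSupport F2 := by
    apply HasCompactSupport.mul_left
    apply HasCompactSupport.mul_left
    exact HasCompactSupport.add
      (HasCompactSupport.mul_right (hcu.comp_left (g := Complex.re) rfl))
      (HasCompactSupport.mul_right (hcu.comp_left (g := Complex.im) rfl))
  have hcsF3 : HasCompactSupport F3 :=
    HasCompactSupport.mul_left (hcu.comp_left (g := fun z : ℂ => ‖z‖ ^ 2) (by simp))
  have hcsF4 : HasCompactSupport F4 := HasCompactSupport.mul_left hcsq
  -- continuity and integrability
  have hcv : Continuous v := hv.continuous
  have hcv' : Continuous (deriv v) := hv.continuous_deriv le_rfl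
  have hcu' : Continuous (deriv u) := hu.continuous_deriv (by simp)
  have hcp : Continuous p := hpc.continuous
  have hcq : Continuous q := hqc.continuous
  have hF1i : Integrable F1 :=
    ((hcv.pow 2).mul (hcu'.norm.pow 2)).integrable_of_hasCompactSupport hcsF1
  have hF2i : Integrable F2 := by
    refine Continuous.integrable_of_hasCompactSupport ?_ hcsF2
    exact (hcv.pow 2).mul (continuous_const.mul
      ((hcp.mul (Complex.continuous_re.comp hcu')).add
        (hcq.mul (Complex.continuous_im.comp hcu'))))
  have hF3i : Integrable F3 :=
    ((hcv.pow 2).mul (hu.continuous.norm.pow 2)).integrable_of_hasCompactSupport hcsF3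
  have hF4i : Integrable F4 := by
    refine Continuous.integrable_of_hasCompactSupport ?_ hcsF4
    exact ((continuous_const.mul hcv).mul hcv').mul ((hcp.pow 2).add (hcq.pow 2))
  -- integration by parts: ∫ (F4 + F2) = 0
  have hzero : ∫ ξ : ℝ, F4 ξ + F2 ξ = 0 := by
    set g : ℝ → ℝ := fun ξ => v ξ ^ 2 * (p ξ ^ 2 + q ξ ^ 2) with hgdef
    have hg1 : ContDiff ℝ 1 g := (hv.pow 2).mul ((hpc.pow 2).add (hqc.pow 2))
    have hgcs : HasCompactSupport g := HasCompactSupport.mul_left hcsq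
    have hgd : ∀ ξ, HasDerivAt g (F4 ξ + F2 ξ) ξ := by
      intro ξ
      have h : HasDerivAt g _ ξ := ((hvd ξ).pow 2).mul (((hpd ξ).pow 2).add ((hqd ξ).pow 2))
      convert h using 1
      simp only [hF4def, hF2def, Pi.pow_apply]
      push_cast
      ring
    have hderivg : deriv g = fun ξ => F4 ξ + F2 ξ := funext fun ξ => (hgd ξ).deriv
    rw [← hderivg]
    exact integral_deriv_eq_zero_aux g hg1 hgcs
  have hF2eq : ∫ ξ : ℝ, F2 ξ = -∫ ξ : ℝ, F4 ξ := by
    have := integral_add hF4i hF2i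
    linarith [hzero.symm.trans this]
  -- pointwise identity for the RHS integrand
  have hpt : ∀ ξ : ℝ, v ξ ^ 2 * ‖deriv u ξ - (b : ℂ) * u ξ‖ ^ 2
      = F1 ξ - b * F2 ξ + b ^ 2 * F3 ξ := by
    intro ξ
    have e1 := norm_sq_complex (deriv u ξ - (b : ℂ) * u ξ)
    have e2 := norm_sq_complex (deriv u ξ)
    have e3 := norm_sq_complex (u ξ)
    simp only [Complex.sub_re, Complex.sub_im, Complex.mul_re, Complex.mul_im,
      Complex.ofReal_re, Complex.ofReal_im] at e1
    simp only [hF1def, hF2def, hF3def, e1, e2, e3, hpdef, hqdef]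
    ring
  -- compute RHS integral
  have hi2 : ∫ ξ : ℝ, b * F2 ξ = b * ∫ ξ : ℝ, F2 ξ := by
    simpa [smul_eq_mul] using integral_smul b F2
  have hi3 : ∫ ξ : ℝ, b ^ 2 * F3 ξ = b ^ 2 * ∫ ξ : ℝ, F3 ξ := by
    simpa [smul_eq_mul] using integral_smul (b ^ 2) F3
  have hi4 : ∫ ξ : ℝ, 2 * C₀ * F3 ξ = 2 * C₀ * ∫ ξ : ℝ, F3 ξ := by
    simpa [smul_eq_mul] using integral_smul (2 * C₀) F3
  have hRHS : ∫ ξ : ℝ, v ξ ^ 2 * ‖deriv u ξ - (b : ℂ) * u ξ‖ ^ 2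
      = ((∫ ξ : ℝ, F1 ξ) - b * (∫ ξ : ℝ, F2 ξ)) + b ^ 2 * (∫ ξ : ℝ, F3 ξ) := by
    rw [show (fun ξ : ℝ => v ξ ^ 2 * ‖deriv u ξ - (b : ℂ) * u ξ‖ ^ 2)
        = fun ξ => (F1 ξ - b * F2 ξ) + b ^ 2 * F3 ξ from funext fun ξ => by
          rw [hpt ξ]]
    have hA : Integrable (fun ξ : ℝ => F1 ξ - b * F2 ξ) := hF1i.sub (hF2i.const_mul b)
    have hB : Integrable (fun ξ : ℝ => b ^ 2 * F3 ξ) := hF3i.const_mul _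
    rw [integral_add hA hB, integral_sub hF1i (hF2i.const_mul b), hi2, hi3]
  -- bounds
  have hF1nn : 0 ≤ ∫ ξ : ℝ, F1 ξ := integral_nonneg fun ξ => by positivity
  have hF3nn : 0 ≤ ∫ ξ : ℝ, F3 ξ := integral_nonneg fun ξ => by positivity
  have hF4bd : |∫ ξ : ℝ, F4 ξ| ≤ 2 * C₀ * (∫ ξ : ℝ, F3 ξ) := by
    calc |∫ ξ : ℝ, F4 ξ| ≤ ∫ ξ : ℝ, |F4 ξ| := by
          simpa [Real.norm_eq_abs] using norm_integral_le_integral_norm F4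
      _ ≤ ∫ ξ : ℝ, 2 * C₀ * F3 ξ := by
          refine integral_mono hF4i.abs (hF3i.const_mul _) fun ξ => ?_
          have h1 := hv' ξ
          have h2 := (hvpos ξ).le
          have h3 : (0:ℝ) ≤ p ξ ^ 2 + q ξ ^ 2 := by positivity
          have h4 : F3 ξ = v ξ ^ 2 * (p ξ ^ 2 + q ξ ^ 2) := by
            simp only [hF3def, norm_sq_complex (u ξ), hpdef, hqdef]
          have h5 : |F4 ξ| = (2 * v ξ * (p ξ ^ 2 + q ξ ^ 2)) * |deriv v ξ| := by
            rw [show F4 ξ = (2 * v ξ * (p ξ ^ 2 + q ξ ^ 2)) * deriv v ξ from by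
              simp only [hF4def]; ring, abs_mul, abs_of_nonneg (by positivity)]
          rw [h5, h4]
          nlinarith [mul_le_mul_of_nonneg_left h1
            (show (0:ℝ) ≤ 2 * v ξ * (p ξ ^ 2 + q ξ ^ 2) by positivity)]
      _ = 2 * C₀ * (∫ ξ : ℝ, F3 ξ) := hi4
  -- conclude
  have hb1 : 1 ≤ |b| := by linarith
  have hbF4 : -(|b| * |∫ ξ : ℝ, F4 ξ|) ≤ b * (∫ ξ : ℝ, F4 ξ) := by
    rw [← abs_mul]; exact neg_abs_le _
  have hkey : 1 ≤ b ^ 2 - 2 * C₀ * |b| := by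
    have : 1 * 1 ≤ |b| * (|b| - 2 * C₀) :=
      mul_le_mul hb1 (by linarith) (by norm_num) (abs_nonneg b)
    nlinarith [sq_abs b]
  have habs4 : -(|b| * (2 * C₀ * (∫ ξ : ℝ, F3 ξ))) ≤ b * (∫ ξ : ℝ, F4 ξ) := by
    refine le_trans ?_ hbF4
    exact neg_le_neg (mul_le_mul_of_nonneg_left hF4bd (abs_nonneg b))
  have hineq : (∫ ξ : ℝ, F3 ξ)
      ≤ ((∫ ξ : ℝ, F1 ξ) - b * (∫ ξ : ℝ, F2 ξ)) + b ^ 2 * (∫ ξ : ℝ, F3 ξ) := by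
    have hb2 : b * (∫ ξ : ℝ, F2 ξ) = -(b * (∫ ξ : ℝ, F4 ξ)) := by rw [hF2eq]; ring
    nlinarith [mul_le_mul_of_nonneg_right hkey hF3nn, sq_abs b, hb2, habs4, hF1nn, hF3nn]
  calc (∫ ξ : ℝ, v ξ ^ 2 * ‖u ξ‖ ^ 2) = ∫ ξ : ℝ, F3 ξ := rfl
    _ ≤ ((∫ ξ : ℝ, F1 ξ) - b * (∫ ξ : ℝ, F2 ξ)) + b ^ 2 * (∫ ξ : ℝ, F3 ξ) := hineq
    _ = _ := hRHS.symm
end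

section
/- Let K ≥ 2 be even, let v ∈ C^K(ℝ) be bounded with v(ξ) > 0 and |v'(ξ)| ≤ C v(ξ), and let Q(x) = Σ_{k=0}^K q_k x^k be a real polynomial with q_K > 0. Suppose Q(x_0) < 0 for some x_0 ∈ ℝ. Then for every N ∈ ℕ there exist linearly independent functions g_1, …, g_N with g_j ∈ L^2(ℝ) and v·g_j ∈ 𝒮(ℝ) such that every nonzero linear combination g = Σ_j α_j g_j satisfies ∫_ℝ [Q(D)(v·g)](ξ)·v(ξ)·conj(g(ξ)) dξ < 0; i.e. the quadratic form of vQ(D)v is negative definite on an N-dimensional subspace for every N (the negative spectrum is infinite). -/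
/-!
Conjugating by the modulation `e^{-i x₀ ξ}` turns `Q(D)` into `Q(x₀ + D)`. For the wave packet
`φ(ξ) = ψ(εξ - c) e^{-i x₀ ξ}` built from an even bump `ψ`, rescaling gives
`ε ∫ Q(D)φ · conj φ = ∑ₘ (Q⁽ᵐ⁾(x₀) / m!) (iε)ᵐ ∫ ψ⁽ᵐ⁾ ψ`,
a polynomial in `ε` that is real (the odd terms vanish by evenness) and equals
`Q(x₀) ∫ ψ² < 0` at `ε = 0`, hence is negative for some `ε > 0`. Packets with disjoint
supports are orthogonal for the form, so for `N` well separated packets the functions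
`g_j = φ_j / v` span a subspace on which the form is negative definite: the weight cancels
because `v g_j = φ_j`.
-/

open MeasureTheory Real Set ComplexConjugate
open scoped ComplexOrder

/-- The differential expression `Q(D) u = ∑_k q_k i^k u^{(k)}` with `D = i d/dξ`. -/
noncomputable def QD (K : ℕ) (q : ℕ → ℝ) (u : ℝ → ℂ) (ξ : ℝ) : ℂ :=
  ∑ k ∈ Finset.range (K + 1), (q k : ℂ) * Complex.I ^ k * iteratedDeriv k u ξ

open Filter Topology Function
open scoped ContDiff

theorem iteratedDeriv_ofReal_comp {f : ℝ → ℝ} {n : WithTop ℕ∞} {x : ℝ}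
    (hf : ContDiffAt ℝ n f x) {m : ℕ} (hm : m ≤ n) :
    iteratedDeriv m (fun y => (f y : ℂ)) x = iteratedDeriv m f x := by
  simp only [iteratedDeriv_eq_iteratedFDeriv]
  rw [show (fun y => (f y : ℂ)) = Complex.ofRealCLM ∘ f from rfl,
    Complex.ofRealCLM.iteratedFDeriv_comp_left hf hm]
  simp

theorem iteratedDeriv_ofReal_comp_mul_sub {ψ : ℝ → ℝ} {n : WithTop ℕ∞}
    (hψ : ContDiff ℝ n ψ) {m : ℕ} (hm : m ≤ n) (ε c ξ : ℝ) :
    iteratedDeriv m (fun ξ => (ψ (ε * ξ - c) : ℂ)) ξ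
      = ε ^ m * iteratedDeriv m ψ (ε * ξ - c) := by
  have hψc : ContDiff ℝ n (fun y => ψ (y - c)) := hψ.comp (contDiff_id.sub contDiff_const)
  have hscale := iteratedDeriv_comp_const_mul (hψc.of_le hm) ε
  simp only [iteratedDeriv_comp_sub_const] at hscale
  rw [iteratedDeriv_ofReal_comp (f := fun ξ => ψ (ε * ξ - c))
    (hψc.comp (contDiff_const.mul contDiff_id)).contDiffAt hm, hscale]
  push_cast
  rfl

theorem iteratedDeriv_cexp_const_mul_ofReal (a : ℂ) (n : ℕ) :
    iteratedDeriv n (fun ξ : ℝ => Complex.exp (a * ξ))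
      = fun ξ : ℝ => a ^ n * Complex.exp (a * ξ) := by
  induction n with
  | zero => simp
  | succ n ih =>
    funext ξ
    have h : HasDerivAt (fun ξ : ℝ => Complex.exp (a * ξ)) (Complex.exp (a * ξ) * a) ξ := by
      simpa using (((hasDerivAt_id (ξ : ℂ)).const_mul a).cexp).comp_ofReal
    rw [iteratedDeriv_succ, ih, (h.const_mul (a ^ n)).deriv]
    ring

theorem I_pow_mul_neg_I_mul_pow {k m : ℕ} (hm : m ≤ k) (x : ℂ) :
    Complex.I ^ k * (-(Complex.I * x)) ^ (k - m) = Complex.I ^ m * x ^ (k - m) := by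
  obtain ⟨d, rfl⟩ := Nat.exists_eq_add_of_le hm
  rw [Nat.add_sub_cancel_left, pow_add, mul_assoc, ← mul_pow]
  congr 2
  ring_nf
  simp

theorem HasCompactSupport.comp_mul_sub {E : Type*} [Zero E] {f : ℝ → E}
    (hf : HasCompactSupport f) {ε : ℝ} (hε : ε ≠ 0) (c : ℝ) :
    HasCompactSupport (fun ξ => f (ε * ξ - c)) :=
  hf.comp_homeomorph ((Homeomorph.mulLeft₀ ε hε).trans (Homeomorph.subRight c))

theorem linearIndependent_of_pairwise_disjoint_support {ι X 𝕜 : Type*} [Field 𝕜]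
    {f : ι → X → 𝕜} (hf : ∀ i, f i ≠ 0)
    (hdisj : Pairwise (Disjoint on fun i => support (f i))) :
    LinearIndependent 𝕜 f := by
  classical
  refine linearIndependent_iff'.mpr fun s g hg i hi => ?_
  obtain ⟨x, hx⟩ := Function.support_nonempty_iff.mpr (hf i)
  have hgx := congrFun hg x
  simp only [Finset.sum_apply, Pi.smul_apply, smul_eq_mul, Pi.zero_apply] at hgx
  rw [Finset.sum_eq_single i (fun j _ hji => ?_) (fun h => (h hi).elim)] at hgx
  · exact (mul_eq_zero.mp hgx).resolve_right hx
  · rw [Function.notMem_support.mp (Set.disjoint_left.mp (hdisj hji.symm) hx), mul_zero]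

theorem sum_normSq_mul_neg {ι : Type*} [Fintype ι] {α : ι → ℂ} (hα : α ≠ 0) {z : ℂ}
    (hz : z < 0) : ∑ j, (Complex.normSq (α j) : ℂ) * z < 0 := by
  obtain ⟨j, hj⟩ := Function.ne_iff.mp hα
  have hpos : 0 < ∑ j, Complex.normSq (α j) := Finset.sum_pos'
    (fun j _ => Complex.normSq_nonneg _) ⟨j, Finset.mem_univ j, Complex.normSq_pos.mpr hj⟩
  rw [← Finset.sum_mul, ← Complex.ofReal_sum]
  exact mul_neg_of_pos_of_neg (Complex.zero_lt_real.mpr hpos) hz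

theorem one_le_abs_natCast_sub_natCast {m n : ℕ} (h : m ≠ n) :
    (1 : ℝ) ≤ |(m : ℝ) - n| := by
  have := Int.one_le_abs (sub_ne_zero.mpr (Nat.cast_injective.ne h : (m : ℤ) ≠ n))
  exact_mod_cast this

section QD

variable {K : ℕ} {q : ℕ → ℝ}

theorem QD_fun_sum {ι : Type*} (s : Finset ι) (α : ι → ℂ) {f : ι → ℝ → ℂ}
    (hf : ∀ i ∈ s, ContDiff ℝ K (f i)) (ξ : ℝ) :
    QD K q (fun η => ∑ i ∈ s, α i * f i η) ξ = ∑ i ∈ s, α i * QD K q (f i) ξ := by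
  simp only [QD, Finset.mul_sum]
  rw [Finset.sum_comm]
  refine Finset.sum_congr rfl fun k hk => ?_
  have hk : (k : WithTop ℕ∞) ≤ K := by
    exact_mod_cast Nat.lt_succ_iff.mp (Finset.mem_range.mp hk)
  rw [iteratedDeriv_fun_sum (f := fun i η => α i * f i η)
    fun i hi => contDiffAt_const.mul ((hf i hi).of_le hk).contDiffAt, Finset.mul_sum]
  refine Finset.sum_congr rfl fun i hi => ?_
  rw [iteratedDeriv_const_mul (α i) ((hf i hi).of_le hk).contDiffAt]
  ring

theorem QD_eq_zero_of_notMem_tsupport {f : ℝ → ℂ} {ξ : ℝ} (h : ξ ∉ tsupport f) :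
    QD K q f ξ = 0 := by
  have hf : f =ᶠ[𝓝 ξ] 0 := notMem_tsupport_iff_eventuallyEq.mp h
  refine Finset.sum_eq_zero fun k _ => ?_
  simp [hf.iteratedDeriv_eq]

theorem continuous_QD {f : ℝ → ℂ} (hf : ContDiff ℝ K f) : Continuous (QD K q f) :=
  continuous_finsetSum _ fun k hk => continuous_const.mul (hf.continuous_iteratedDeriv k
    (by exact_mod_cast Nat.le_of_lt_succ (Finset.mem_range.mp hk)))

theorem QD_mul_conj_eq_zero_of_disjoint {f g : ℝ → ℂ} (h : Disjoint (tsupport f) (tsupport g))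
    (ξ : ℝ) : QD K q f ξ * conj (g ξ) = 0 := by
  by_cases hξ : ξ ∈ tsupport f
  · rw [image_eq_zero_of_notMem_tsupport (Set.disjoint_left.mp h hξ), map_zero, mul_zero]
  · rw [QD_eq_zero_of_notMem_tsupport hξ, zero_mul]

theorem integral_QD_sum_mul_conj_sum {ι : Type*} [Fintype ι] {f : ι → ℝ → ℂ}
    (hf : ∀ j, ContDiff ℝ K (f j)) (hfc : ∀ j, HasCompactSupport (f j))
    (hdisj : Pairwise (Disjoint on fun j => tsupport (f j))) (α : ι → ℂ) :
    ∫ ξ, QD K q (fun η => ∑ j, α j * f j η) ξ * conj (∑ j, α j * f j ξ)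
      = ∑ j, (Complex.normSq (α j) : ℂ) * ∫ ξ, QD K q (f j) ξ * conj (f j ξ) := by
  have hdiag : ∀ ξ, QD K q (fun η => ∑ j, α j * f j η) ξ * conj (∑ j, α j * f j ξ)
      = ∑ j, (Complex.normSq (α j) : ℂ) * (QD K q (f j) ξ * conj (f j ξ)) := fun ξ => by
    rw [QD_fun_sum _ _ fun j _ => hf j, map_sum, Finset.sum_mul_sum]
    refine Finset.sum_congr rfl fun j _ => ?_
    rw [Finset.sum_eq_single j (fun l _ hlj => ?_) (by simp), map_mul]
    · linear_combination (QD K q (f j) ξ * conj (f j ξ)) * Complex.mul_conj (α j)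
    · rw [map_mul, mul_mul_mul_comm, QD_mul_conj_eq_zero_of_disjoint (hdisj hlj.symm), mul_zero]
  have hint : ∀ j, Integrable fun ξ => QD K q (f j) ξ * conj (f j ξ) := fun j =>
    ((continuous_QD (hf j)).mul (Complex.continuous_conj.comp (hf j).continuous))
      |>.integrable_of_hasCompactSupport ((hfc j).comp_left (map_zero conj)).mul_left
  simp_rw [hdiag]
  rw [integral_finsetSum _ fun j _ => (hint j).const_mul _]
  simp_rw [integral_const_mul]

theorem integral_weighted_QD_form {v : ℝ → ℝ} {g u : ℝ → ℂ}
    (h : ∀ ξ, (v ξ : ℂ) * g ξ = u ξ) :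
    ∫ ξ, QD K q (fun η => (v η : ℂ) * g η) ξ * v ξ * conj (g ξ)
      = ∫ ξ, QD K q u ξ * conj (u ξ) := by
  refine integral_congr_ae (Eventually.of_forall fun ξ => ?_)
  dsimp only
  rw [funext h, mul_assoc, ← Complex.conj_ofReal (v ξ), ← map_mul, h]

/-- `taylorCoeff K q x₀ m` is the coefficient of `x ^ m` in `Q (x₀ + x)`. -/
noncomputable def taylorCoeff (K : ℕ) (q : ℕ → ℝ) (x₀ : ℝ) (m : ℕ) : ℝ :=
  ∑ k ∈ Finset.range (K + 1), q k * k.choose m * x₀ ^ (k - m)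

theorem taylorCoeff_zero (K : ℕ) (q : ℕ → ℝ) (x₀ : ℝ) :
    taylorCoeff K q x₀ 0 = ∑ k ∈ Finset.range (K + 1), q k * x₀ ^ k := by
  simp [taylorCoeff]

theorem QD_mul_cexp {u : ℝ → ℂ} (hu : ContDiff ℝ K u) (x₀ ξ : ℝ) :
    QD K q (fun η => u η * Complex.exp (-(Complex.I * x₀) * η)) ξ
      = QD K (taylorCoeff K q x₀) u ξ * Complex.exp (-(Complex.I * x₀) * ξ) := by
  set a : ℂ := -(Complex.I * x₀)
  simp only [QD, taylorCoeff]
  push_cast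
  simp only [Finset.sum_mul]
  rw [Finset.sum_comm]
  refine Finset.sum_congr rfl fun k hk => ?_
  have hkK : k + 1 ≤ K + 1 := Finset.mem_range.mp hk
  have hu' : ContDiffAt ℝ k u ξ :=
    (hu.of_le (by exact_mod_cast Nat.le_of_lt_succ hkK)).contDiffAt
  have he : ContDiff ℝ k (fun η : ℝ => Complex.exp (a * η)) :=
    Complex.contDiff_exp.comp (contDiff_const.mul Complex.ofRealCLM.contDiff)
  simp only [iteratedDeriv_fun_mul hu' he.contDiffAt, iteratedDeriv_cexp_const_mul_ofReal]
  rw [← Finset.sum_subset (Finset.range_subset_range.mpr hkK), Finset.mul_sum]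
  · refine Finset.sum_congr rfl fun m hm => ?_
    have := I_pow_mul_neg_I_mul_pow (Nat.le_of_lt_succ (Finset.mem_range.mp hm)) (x₀ : ℂ)
    linear_combination (↑(q k) * ↑(k.choose m) * iteratedDeriv m u ξ
      * Complex.exp (a * ↑ξ)) * this
  · intro m _ hm
    rw [Nat.choose_eq_zero_of_lt (by simpa using hm)]
    simp

end QD

section DerivPairing

variable {ψ : ℝ → ℝ}

noncomputable def derivPairing (ψ : ℝ → ℝ) (m : ℕ) : ℝ :=
  ∫ x, iteratedDeriv m ψ x * ψ x

theorem neg_one_pow_mul_derivPairing (hψ : Function.Even ψ) (m : ℕ) :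
    (-1) ^ m * derivPairing ψ m = derivPairing ψ m := by
  have hreflect : ∀ x, iteratedDeriv m ψ (-x) = (-1) ^ m * iteratedDeriv m ψ x := fun x => by
    simpa [hψ _] using iteratedDeriv_comp_neg m ψ (-x)
  calc (-1) ^ m * derivPairing ψ m
      = ∫ x, iteratedDeriv m ψ (-x) * ψ (-x) := by
        simp only [derivPairing, ← integral_const_mul, hreflect, hψ _, mul_assoc]
    _ = derivPairing ψ m := integral_neg_eq_self (fun x => iteratedDeriv m ψ x * ψ x) volume

theorem derivPairing_zero_pos (hψ : Continuous ψ) (hψc : HasCompactSupport ψ)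
    (hψ0 : ψ ≠ 0) : 0 < derivPairing ψ 0 := by
  obtain ⟨x, hx⟩ := Function.ne_iff.mp hψ0
  simp only [derivPairing, iteratedDeriv_zero]
  exact (hψ.mul hψ).integral_pos_of_hasCompactSupport_nonneg_nonzero hψc.mul_left
    (fun y => mul_self_nonneg (ψ y)) (mul_self_ne_zero.mpr hx)

theorem integral_iteratedDeriv_comp_mul_sub {ε : ℝ} (hε : 0 < ε) (c : ℝ) (m : ℕ) :
    ∫ ξ, iteratedDeriv m ψ (ε * ξ - c) * ψ (ε * ξ - c) = ε⁻¹ * derivPairing ψ m := by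
  rw [Measure.integral_comp_mul_left (fun y => iteratedDeriv m ψ (y - c) * ψ (y - c)),
    integral_sub_right_eq_self (fun y => iteratedDeriv m ψ y * ψ y), abs_of_pos (inv_pos.mpr hε),
    smul_eq_mul, derivPairing]

end DerivPairing

section PacketEnergy

noncomputable def packetEnergy (K : ℕ) (q : ℕ → ℝ) (ψ : ℝ → ℝ) (x₀ ε : ℝ) : ℂ :=
  ∑ m ∈ Finset.range (K + 1),
    (taylorCoeff K q x₀ m : ℂ) * (Complex.I * ε) ^ m * derivPairing ψ m

variable {K : ℕ} {q : ℕ → ℝ} {ψ : ℝ → ℝ} {x₀ : ℝ}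

theorem continuous_packetEnergy : Continuous (packetEnergy K q ψ x₀) := by
  unfold packetEnergy
  fun_prop

theorem packetEnergy_zero :
    packetEnergy K q ψ x₀ 0
      = ((∑ k ∈ Finset.range (K + 1), q k * x₀ ^ k) * derivPairing ψ 0 : ℝ) := by
  rw [packetEnergy, Finset.sum_eq_single_of_mem 0 (by simp)]
  · simp [taylorCoeff_zero]
  · intro m _ hm
    simp [zero_pow hm]

theorem conj_packetEnergy (hψ : Function.Even ψ) (ε : ℝ) :
    conj (packetEnergy K q ψ x₀ ε) = packetEnergy K q ψ x₀ ε := by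
  simp only [packetEnergy, map_sum, map_mul, map_pow, Complex.conj_ofReal, Complex.conj_I]
  refine Finset.sum_congr rfl fun m _ => ?_
  conv_rhs => rw [← neg_one_pow_mul_derivPairing hψ m]
  rw [neg_mul, neg_pow]
  push_cast
  ring

theorem exists_pos_packetEnergy_neg (hψ : Function.Even ψ) (hψ0 : 0 < derivPairing ψ 0)
    (hx₀ : ∑ k ∈ Finset.range (K + 1), q k * x₀ ^ k < 0) :
    ∃ ε > 0, packetEnergy K q ψ x₀ ε < 0 := by
  have hre : Tendsto (fun ε => (packetEnergy K q ψ x₀ ε).re) (𝓝[>] 0)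
      (𝓝 (packetEnergy K q ψ x₀ 0).re) :=
    ((Complex.continuous_re.comp continuous_packetEnergy).tendsto 0).mono_left nhdsWithin_le_nhds
  have h0 : (packetEnergy K q ψ x₀ 0).re < 0 := by
    rw [packetEnergy_zero, Complex.ofReal_re]
    exact mul_neg_of_neg_of_pos hx₀ hψ0
  obtain ⟨ε, hneg, hε⟩ := ((hre.eventually (gt_mem_nhds h0)).and self_mem_nhdsWithin).exists
  refine ⟨ε, hε, Complex.lt_def.mpr ⟨hneg, ?_⟩⟩
  simpa using Complex.conj_eq_iff_im.mp (conj_packetEnergy hψ ε)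

end PacketEnergy

section WavePacket

variable {ψ : ℝ → ℝ} {x₀ ε c : ℝ}

/-- `e^{-i x₀ ξ}` is an eigenfunction of `D = i d/dξ` with eigenvalue `x₀`. -/
noncomputable def wavePacket (ψ : ℝ → ℝ) (x₀ ε c : ℝ) (ξ : ℝ) : ℂ :=
  (ψ (ε * ξ - c) : ℂ) * Complex.exp (-(Complex.I * x₀) * ξ)

theorem contDiff_wavePacket {n : WithTop ℕ∞} (hψ : ContDiff ℝ n ψ) :
    ContDiff ℝ n (wavePacket ψ x₀ ε c) :=
  (Complex.ofRealCLM.contDiff.comp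
    (hψ.comp ((contDiff_const.mul contDiff_id).sub contDiff_const))).mul
    (Complex.contDiff_exp.comp (contDiff_const.mul Complex.ofRealCLM.contDiff))

theorem hasCompactSupport_wavePacket (hψ : HasCompactSupport ψ) (hε : ε ≠ 0) :
    HasCompactSupport (wavePacket ψ x₀ ε c) :=
  ((hψ.comp_mul_sub hε c).comp_left Complex.ofReal_zero).mul_right

theorem wavePacket_ne_zero (hψ : ψ ≠ 0) (hε : ε ≠ 0) : wavePacket ψ x₀ ε c ≠ 0 := by
  obtain ⟨x, hx⟩ := Function.ne_iff.mp hψ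
  refine Function.ne_iff.mpr ⟨(x + c) / ε, ?_⟩
  simpa [wavePacket, mul_div_cancel₀ _ hε, Complex.exp_ne_zero] using hx

theorem tsupport_wavePacket_subset :
    tsupport (wavePacket ψ x₀ ε c) ⊆ (fun ξ => ε * ξ - c) ⁻¹' tsupport ψ :=
  closure_minimal (fun ξ hξ => subset_tsupport ψ (by simpa [wavePacket] using hξ))
    ((isClosed_tsupport ψ).preimage (by fun_prop))

theorem disjoint_tsupport_wavePacket {R c' : ℝ} (hψ : tsupport ψ ⊆ Metric.closedBall 0 R)
    (hc : 2 * R < |c - c'|) :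
    Disjoint (tsupport (wavePacket ψ x₀ ε c)) (tsupport (wavePacket ψ x₀ ε c')) := by
  refine Set.disjoint_left.mpr fun ξ h h' => ?_
  have h₁ := hψ (tsupport_wavePacket_subset h)
  have h₂ := hψ (tsupport_wavePacket_subset h')
  simp only [Metric.mem_closedBall, dist_zero_right, Real.norm_eq_abs] at h₁ h₂
  have := abs_sub_le c (ε * ξ) c'
  rw [abs_sub_comm] at h₁
  linarith

theorem pairwise_disjoint_tsupport_wavePacket {R : ℝ}
    (hψ : tsupport ψ ⊆ Metric.closedBall 0 R) (hR : 0 < R) :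
    Pairwise (Disjoint on fun j : ℕ => tsupport (wavePacket ψ x₀ ε (3 * R * j))) :=
  fun j l hjl => by
    refine disjoint_tsupport_wavePacket hψ ?_
    have := one_le_abs_natCast_sub_natCast hjl
    rw [← mul_sub, abs_mul, abs_of_pos (by positivity)]
    nlinarith

theorem QD_wavePacket_mul_conj {K : ℕ} {q : ℕ → ℝ} (hψ : ContDiff ℝ K ψ) (ξ : ℝ) :
    QD K q (wavePacket ψ x₀ ε c) ξ * conj (wavePacket ψ x₀ ε c ξ)
      = ∑ m ∈ Finset.range (K + 1), (taylorCoeff K q x₀ m : ℂ) * (Complex.I * ε) ^ m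
          * ((iteratedDeriv m ψ (ε * ξ - c) * ψ (ε * ξ - c) : ℝ) : ℂ) := by
  set e := Complex.exp (-(Complex.I * x₀) * ξ)
  have he : e * conj e = 1 := by
    simp [e, Complex.mul_conj, Complex.normSq_eq_norm_sq, Complex.norm_exp]
  have hu : ContDiff ℝ K (fun ξ => (ψ (ε * ξ - c) : ℂ)) :=
    Complex.ofRealCLM.contDiff.comp
      (hψ.comp ((contDiff_const.mul contDiff_id).sub contDiff_const))
  unfold wavePacket
  rw [QD_mul_cexp hu, QD, map_mul, Complex.conj_ofReal, Finset.sum_mul, Finset.sum_mul]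
  refine Finset.sum_congr rfl fun m hm => ?_
  rw [iteratedDeriv_ofReal_comp_mul_sub hψ
    (by exact_mod_cast Nat.le_of_lt_succ (Finset.mem_range.mp hm))]
  push_cast
  linear_combination ((taylorCoeff K q x₀ m : ℂ) * (Complex.I * ε) ^ m
    * ((iteratedDeriv m ψ (ε * ξ - c) : ℝ) : ℂ) * (ψ (ε * ξ - c) : ℂ)) * he

theorem integral_QD_wavePacket_mul_conj {K : ℕ} {q : ℕ → ℝ} (hψ : ContDiff ℝ K ψ)
    (hψc : HasCompactSupport ψ) (hε : 0 < ε) :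
    ∫ ξ, QD K q (wavePacket ψ x₀ ε c) ξ * conj (wavePacket ψ x₀ ε c ξ)
      = (ε⁻¹ : ℝ) * packetEnergy K q ψ x₀ ε := by
  have hint : ∀ m ∈ Finset.range (K + 1),
      Integrable (fun ξ => iteratedDeriv m ψ (ε * ξ - c) * ψ (ε * ξ - c)) := fun m hm => by
    have hmK : (m : WithTop ℕ∞) ≤ K := by
      exact_mod_cast Nat.le_of_lt_succ (Finset.mem_range.mp hm)
    have hcont : Continuous (iteratedDeriv m ψ) := hψ.continuous_iteratedDeriv m hmK
    exact (by fun_prop : Continuous fun ξ => iteratedDeriv m ψ (ε * ξ - c) * ψ (ε * ξ - c))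
      |>.integrable_of_hasCompactSupport (hψc.comp_mul_sub hε.ne' c).mul_left
  simp_rw [QD_wavePacket_mul_conj hψ]
  rw [integral_finsetSum _ fun m hm => ((hint m hm).ofReal).const_mul _]
  simp_rw [integral_const_mul, integral_complex_ofReal, integral_iteratedDeriv_comp_mul_sub hε,
    packetEnergy, Finset.mul_sum]
  refine Finset.sum_congr rfl fun m _ => ?_
  push_cast
  ring

end WavePacket

theorem exists_family_QD_form_neg {K : ℕ} {q : ℕ → ℝ} {x₀ : ℝ}
    (hx₀ : ∑ k ∈ Finset.range (K + 1), q k * x₀ ^ k < 0) (N : ℕ) :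
    ∃ φ : Fin N → ℝ → ℂ, (∀ j, ContDiff ℝ ∞ (φ j)) ∧ (∀ j, HasCompactSupport (φ j)) ∧
      (∀ j, φ j ≠ 0) ∧ Pairwise (Disjoint on fun j => tsupport (φ j)) ∧
      ∀ α : Fin N → ℂ, α ≠ 0 →
        ∫ ξ, QD K q (fun η => ∑ j, α j * φ j η) ξ * conj (∑ j, α j * φ j ξ) < 0 := by
  let b : ContDiffBump (0 : ℝ) := ⟨1, 2, one_pos, one_lt_two⟩
  have hb0 : (b : ℝ → ℝ) ≠ 0 := Function.ne_iff.mpr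
    ⟨0, (b.pos_of_mem_ball (Metric.mem_ball_self b.rOut_pos)).ne'⟩
  obtain ⟨ε, hε, hE⟩ := exists_pos_packetEnergy_neg (K := K) (q := q) b.neg
    (derivPairing_zero_pos b.continuous b.hasCompactSupport hb0) hx₀
  set φ : Fin N → ℝ → ℂ := fun j => wavePacket b x₀ ε (3 * b.rOut * (j : ℕ))
  have hφ : ∀ j, ContDiff ℝ ∞ (φ j) := fun j => contDiff_wavePacket b.contDiff
  have hφc : ∀ j, HasCompactSupport (φ j) := fun j =>
    hasCompactSupport_wavePacket b.hasCompactSupport hε.ne'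
  have hdisj : Pairwise (Disjoint on fun j => tsupport (φ j)) :=
    (pairwise_disjoint_tsupport_wavePacket b.tsupport_eq.subset b.rOut_pos).comp_of_injective
      Fin.val_injective
  refine ⟨φ, hφ, hφc, fun j => wavePacket_ne_zero hb0 hε.ne', hdisj, fun α hα => ?_⟩
  rw [integral_QD_sum_mul_conj_sum (fun j => contDiff_wavePacket b.contDiff) hφc hdisj]
  simp_rw [integral_QD_wavePacket_mul_conj b.contDiff b.hasCompactSupport hε]
  exact sum_normSq_mul_neg hα
    (mul_neg_of_pos_of_neg (Complex.zero_lt_real.mpr (inv_pos.mpr hε)) hE)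

theorem vQDv_infinite_negative_spectrum_general
    (K : ℕ) (v : ℝ → ℝ) (q : ℕ → ℝ)
    (hv : ContDiff ℝ K v) (hvpos : ∀ ξ, 0 < v ξ)
    (x₀ : ℝ) (hx₀ : ∑ k ∈ Finset.range (K + 1), q k * x₀ ^ k < 0) :
    ∀ N : ℕ, ∃ g : Fin N → ℝ → ℂ,
      (∀ j, MemLp (g j) 2 (volume : Measure ℝ)) ∧
      (∀ j, ∃ φ : SchwartzMap ℝ ℂ, ∀ ξ : ℝ, (v ξ : ℂ) * g j ξ = φ ξ) ∧
      LinearIndependent ℂ g ∧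
      (∀ α : Fin N → ℂ, α ≠ 0 →
        (∫ ξ : ℝ, QD K q (fun η => (v η : ℂ) * ∑ j, α j * g j η) ξ * (v ξ : ℂ)
            * conj (∑ j, α j * g j ξ)) < 0) := by
  intro N
  obtain ⟨φ, hφ, hφc, hφ0, hdisj, hneg⟩ := exists_family_QD_form_neg hx₀ N
  have hvne : ∀ ξ, (v ξ : ℂ) ≠ 0 := fun ξ => Complex.ofReal_ne_zero.mpr (hvpos ξ).ne'
  have hsupp : ∀ j, support (fun ξ => φ j ξ / v ξ) = support (φ j) := fun j => by
    ext ξ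
    simp [hvne ξ]
  refine ⟨fun j ξ => φ j ξ / v ξ, fun j => ?_,
    fun j => ⟨(hφc j).toSchwartzMap (hφ j), fun ξ => mul_div_cancel₀ _ (hvne ξ)⟩, ?_,
    fun α hα => ?_⟩
  · exact ((hφ j).continuous.div (Complex.continuous_ofReal.comp hv.continuous) hvne)
      |>.memLp_of_hasCompactSupport ((hφc j).mono (hsupp j).subset)
  · refine linearIndependent_of_pairwise_disjoint_support (fun j hj => ?_) fun j l hjl => ?_
    · exact hφ0 j (Function.support_eq_empty_iff.mp (by rw [← hsupp j, hj, support_zero]))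
    · simpa only [hsupp] using (hdisj hjl).mono (subset_tsupport _) (subset_tsupport _)
  · rw [integral_weighted_QD_form fun ξ => ?_]
    · exact hneg α hα
    · rw [Finset.mul_sum]
      exact Finset.sum_congr rfl fun j _ => by field_simp [hvne ξ]

/-- If `Q(x₀) < 0` for some `x₀`, the quadratic form of `A = v Q(D) v` is negative definite on
an `N`-dimensional subspace for every `N`: the negative spectrum is infinite. -/
theorem vQDv_infinite_negative_spectrum
    (K : ℕ) (hK : 2 ≤ K) (hKeven : Even K) (v : ℝ → ℝ) (q : ℕ → ℝ)
    (hv : ContDiff ℝ K v) (hvbdd : ∃ M : ℝ, ∀ ξ, v ξ ≤ M) (hvpos : ∀ ξ, 0 < v ξ)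
    (C : ℝ) (hv' : ∀ ξ, |deriv v ξ| ≤ C * v ξ)
    (hqK : 0 < q K)
    (x₀ : ℝ) (hx₀ : ∑ k ∈ Finset.range (K + 1), q k * x₀ ^ k < 0) :
    ∀ N : ℕ, ∃ g : Fin N → ℝ → ℂ,
      (∀ j, MemLp (g j) 2 (volume : Measure ℝ)) ∧
      (∀ j, ∃ φ : SchwartzMap ℝ ℂ, ∀ ξ : ℝ, (v ξ : ℂ) * g j ξ = φ ξ) ∧
      LinearIndependent ℂ g ∧
      (∀ α : Fin N → ℂ, α ≠ 0 →
        (∫ ξ : ℝ, QD K q (fun η => (v η : ℂ) * ∑ j, α j * g j η) ξ * (v ξ : ℂ)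
            * conj (∑ j, α j * g j ξ)) < 0) :=
  vQDv_infinite_negative_spectrum_general K v q hv hvpos x₀ hx₀
end

section
/- Let v : ℝ → (0,∞) be continuous with v(ξ) → 0 as |ξ| → ∞. Let (u_n) be a sequence of continuously differentiable functions in L^2(ℝ) such that ∫_ℝ (v(ξ)^2 |u_n'(ξ)|^2 + v(ξ)^{-2} |u_n(ξ)|^2) dξ ≤ C for all n and some constant C. Then (u_n) has a subsequence that converges in L^2(ℝ). -/
/-!
The weight makes `(u n)` uniformly bounded and equicontinuous. The derivative `2 ⟪u, u'⟫` of
`‖u‖²` is dominated by the energy density `v² ‖u'‖² + v⁻² ‖u‖²`, and `u ∈ L²` makes `‖u‖²`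
arbitrarily small somewhere, so `‖u‖² ≤ C` everywhere; Cauchy–Schwarz against the weight gives
`‖u x - u y‖² ≤ C ∫_x^y v⁻²`. Arzelà–Ascoli then yields a locally uniformly convergent
subsequence. Since `‖u‖ ≤ |v| ‖v⁻¹ u‖` with `‖v⁻¹ u‖_{L²}² ≤ C` and `v → 0` at infinity, the family
is uniformly tight in `L²`, and being uniformly bounded it is uniformly integrable, so Vitali's
convergence theorem upgrades pointwise convergence to convergence in `L²`.
-/

open MeasureTheory Real Set Filter Topology Uniformity Interval ENNReal

section ArzelaAscoli

variable {X α : Type*} [TopologicalSpace X] [WeaklyLocallyCompactSpace X] [SigmaCompactSpace X]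
  [UniformSpace α] [T2Space α] [IsCountablyGenerated (𝓤 α)]

theorem Equicontinuous.exists_strictMono_tendstoLocallyUniformly {F : ℕ → X → α}
    (hF : Equicontinuous F) (hbdd : ∀ x, ∃ Q, IsCompact Q ∧ ∀ n, F n x ∈ Q) :
    ∃ φ : ℕ → ℕ, StrictMono φ ∧ ∃ g : X → α,
      TendstoLocallyUniformly (fun k => F (φ k)) g atTop := by
  let 𝔖 : Set (Set X) := {K | IsCompact K}
  let G : ℕ → UniformOnFun X α 𝔖 := fun n => UniformOnFun.ofFun 𝔖 (F n)
  have hcpt : IsCompact (closure (range G)) := by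
    refine ArzelaAscoli.isCompact_closure_of_isClosedEmbedding (F := UniformOnFun.toFun 𝔖)
      (fun K hK => hK) IsClosedEmbedding.id (fun K _ => ?_) (fun K _ x _ => ?_)
    · exact (equicontinuous_iff_range.1 hF).equicontinuousOn K
    · obtain ⟨Q, hQ, hFQ⟩ := hbdd x
      exact ⟨Q, hQ, forall_mem_range.2 fun n => hFQ n⟩
  have : IsCountablyGenerated (𝓤 (UniformOnFun X α 𝔖)) :=
    let K := CompactExhaustion.choice X
    UniformOnFun.isCountablyGenerated_uniformity 𝔖 K.isCompact K.subset
      fun _ => K.exists_superset_of_isCompact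
  obtain ⟨g, -, φ, hφ, hlim⟩ := hcpt.tendsto_subseq fun n => subset_closure (mem_range_self n)
  refine ⟨φ, hφ, UniformOnFun.toFun 𝔖 g, fun V hV x => ?_⟩
  obtain ⟨K, hK, hKx⟩ := exists_compact_mem_nhds x
  exact ⟨K, hKx, UniformOnFun.tendsto_iff_tendstoUniformlyOn.1 hlim K hK V hV⟩

end ArzelaAscoli

theorem norm_sub_le_setIntegral_norm_deriv {E : Type*} [NormedAddCommGroup E] [NormedSpace ℝ E]
    [CompleteSpace E] {f f' : ℝ → E} (hf : ∀ t, HasDerivAt f (f' t) t) (hf' : Continuous f')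
    (x y : ℝ) : ‖f x - f y‖ ≤ ∫ t in Ι x y, ‖f' t‖ := by
  rw [norm_sub_rev, ← intervalIntegral.integral_eq_sub_of_hasDerivAt (fun t _ => hf t)
    (hf'.intervalIntegrable x y)]
  exact intervalIntegral.norm_integral_le_integral_norm_uIoc

section Lp

variable {α E : Type*} [MeasurableSpace α] {μ : Measure α} [NormedAddCommGroup E]

theorem MeasureTheory.Integrable.exists_lt {f : α → ℝ} (hf : Integrable f μ) (hμ : μ univ = ∞)
    {δ : ℝ} (hδ : 0 < δ) : ∃ x, f x < δ := by
  by_contra! h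
  have hδint : Integrable (fun _ => δ) μ :=
    hf.mono' aestronglyMeasurable_const (ae_of_all _ fun x => by
      rw [Real.norm_of_nonneg hδ.le]; exact h x)
  rcases integrable_const_iff.1 hδint with hδ0 | hfin
  · exact hδ.ne' hδ0
  · exact measure_ne_top μ univ hμ

theorem memLp_of_ae_tendsto_of_eLpNorm_le {f : ℕ → α → E} {g : α → E} {p B : ℝ≥0∞}
    (hB : B ≠ ∞) (hf : ∀ n, AEStronglyMeasurable (f n) μ) (hfB : ∀ n, eLpNorm (f n) p μ ≤ B)
    (hfg : ∀ᵐ x ∂μ, Tendsto (fun n => f n x) atTop (𝓝 (g x))) : MemLp g p μ :=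
  ⟨aestronglyMeasurable_of_tendsto_ae atTop hf hfg,
    (Lp.eLpNorm_le_of_ae_tendsto (Eventually.of_forall hfB) hf hfg).trans_lt hB.lt_top⟩

theorem unifIntegrable_of_forall_norm_le {ι : Type*} {f : ι → α → E} {p : ℝ≥0∞} (hp : 1 ≤ p)
    (hp' : p ≠ ∞) (hf : ∀ i, AEStronglyMeasurable (f i) μ) {B : ℝ} (hB : ∀ i x, ‖f i x‖ ≤ B) :
    UnifIntegrable f p μ :=
  unifIntegrable_of hp hp' hf fun _ _ => ⟨B.toNNReal + 1, fun i => by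
    have hempty : {x | B.toNNReal + 1 ≤ ‖f i x‖₊} = ∅ := eq_empty_of_forall_notMem fun x hx => by
      have := (Real.toNNReal_le_toNNReal (hB i x)).trans_lt (lt_add_one B.toNNReal)
      exact (lt_of_lt_of_le (by simpa using this) hx).false
    simp [hempty]⟩

variable [NormedSpace ℝ E]

theorem eLpNorm_le_mul_eLpNorm_inv_smul {w : α → ℝ} {η : ℝ} (hw0 : ∀ x, w x ≠ 0)
    (hwη : ∀ᵐ x ∂μ, ‖w x‖ ≤ η) (f : α → E) (p : ℝ≥0∞) :
    eLpNorm f p μ ≤ ENNReal.ofReal η * eLpNorm (fun x => (w x)⁻¹ • f x) p μ := by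
  refine eLpNorm_le_mul_eLpNorm_of_ae_le_mul (hwη.mono fun x hx => ?_) p
  rw [norm_smul, norm_inv, ← mul_assoc]
  calc ‖f x‖ = ‖w x‖ * ‖w x‖⁻¹ * ‖f x‖ := by
        rw [mul_inv_cancel₀ (norm_ne_zero_iff.2 (hw0 x)), one_mul]
    _ ≤ η * ‖w x‖⁻¹ * ‖f x‖ := by gcongr

theorem unifTight_of_eLpNorm_inv_smul_le [TopologicalSpace α] [T2Space α] [OpensMeasurableSpace α]
    [IsFiniteMeasureOnCompacts μ] {w : α → ℝ} (hw0 : ∀ x, w x ≠ 0)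
    (hw : Tendsto w (cocompact α) (𝓝 0)) {ι : Type*} {f : ι → α → E} {p B : ℝ≥0∞} (hB : B ≠ ∞)
    (hf : ∀ i, eLpNorm (fun x => (w x)⁻¹ • f i x) p μ ≤ B) : UnifTight f p μ := by
  rw [unifTight_iff_ennreal]
  intro ε hε
  obtain ⟨η, hη, hηB⟩ := ENNReal.exists_nnreal_pos_mul_lt hB hε.ne'
  obtain ⟨K, hK, hKw⟩ :=
    hasBasis_cocompact.eventually_iff.1 (hw.eventually (Metric.closedBall_mem_nhds 0 hη))
  refine ⟨K, hK.measure_lt_top.ne, fun i => ?_⟩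
  have hKc : MeasurableSet Kᶜ := hK.isClosed.measurableSet.compl
  rw [eLpNorm_indicator_eq_eLpNorm_restrict hKc]
  calc eLpNorm (f i) p (μ.restrict Kᶜ)
      ≤ ENNReal.ofReal η * eLpNorm (fun x => (w x)⁻¹ • f i x) p (μ.restrict Kᶜ) :=
        eLpNorm_le_mul_eLpNorm_inv_smul hw0 ((ae_restrict_iff' hKc).2 (ae_of_all _ fun x hx =>
          mem_closedBall_zero_iff.1 (hKw hx))) _ _
    _ ≤ η * B := by
        rw [ENNReal.ofReal_coe_nnreal]
        gcongr
        exact (eLpNorm_mono_measure _ Measure.restrict_le_self).trans (hf i)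
    _ ≤ ε := hηB.le

end Lp

noncomputable def weightedEnergy {E : Type*} [NormedAddCommGroup E] [NormedSpace ℝ E]
    (v : ℝ → ℝ) (u : ℝ → E) : ENNReal :=
  ∫⁻ ξ, ENNReal.ofReal (v ξ ^ 2 * ‖deriv u ξ‖ ^ 2) + ENNReal.ofReal ((v ξ ^ 2)⁻¹ * ‖u ξ‖ ^ 2)

section WeightedEnergy

variable {E : Type*} [NormedAddCommGroup E] [NormedSpace ℝ E] {v : ℝ → ℝ} {u : ℝ → E} {C : ℝ}

theorem setIntegral_le_of_weightedEnergy_le (hE : weightedEnergy v u ≤ ENNReal.ofReal C)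
    (hC : 0 ≤ C) {h : ℝ → ℝ}
    (hh : ∀ t, |h t| ≤ v t ^ 2 * ‖deriv u t‖ ^ 2 + (v t ^ 2)⁻¹ * ‖u t‖ ^ 2) (s : Set ℝ) :
    ∫ t in s, h t ≤ C := by
  have hlint : ∫⁻ t in s, ENNReal.ofReal ‖h t‖ ≤ ENNReal.ofReal C :=
    setLIntegral_le_lintegral s _ |>.trans <| (lintegral_mono fun t =>
      (ENNReal.ofReal_le_ofReal (hh t)).trans ENNReal.ofReal_add_le).trans hE
  calc ∫ t in s, h t ≤ ‖∫ t in s, h t‖ := le_norm_self _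
    _ ≤ (∫⁻ t in s, ENNReal.ofReal ‖h t‖).toReal := norm_integral_le_lintegral_norm _
    _ ≤ C := ENNReal.toReal_le_of_le_ofReal hC hlint

theorem eLpNorm_inv_smul_le_of_weightedEnergy_le (hE : weightedEnergy v u ≤ ENNReal.ofReal C)
    (hC : 0 ≤ C) : eLpNorm (fun x => (v x)⁻¹ • u x) 2 volume ≤ ENNReal.ofReal √C := by
  have hlint : ∫⁻ x, ‖(v x)⁻¹ • u x‖ₑ ^ (2 : ℝ) ≤ ENNReal.ofReal C := by
    refine (lintegral_mono fun x => ?_).trans hE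
    rw [← ofReal_norm, ENNReal.ofReal_rpow_of_nonneg (norm_nonneg _) zero_le_two, norm_smul,
      norm_inv, Real.rpow_two, mul_pow, inv_pow, Real.norm_eq_abs, sq_abs]
    exact le_add_self
  rw [eLpNorm_eq_lintegral_rpow_enorm_toReal two_ne_zero ENNReal.ofNat_ne_top,
    ENNReal.toReal_ofNat, Real.sqrt_eq_rpow, ← ENNReal.ofReal_rpow_of_nonneg hC (by norm_num)]
  gcongr

theorem eLpNorm_le_of_weightedEnergy_le {V : ℝ} (hv0 : ∀ t, v t ≠ 0) (hV : ∀ t, ‖v t‖ ≤ V)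
    (hE : weightedEnergy v u ≤ ENNReal.ofReal C) (hC : 0 ≤ C) :
    eLpNorm u 2 volume ≤ ENNReal.ofReal V * ENNReal.ofReal √C :=
  (eLpNorm_le_mul_eLpNorm_inv_smul hv0 (ae_of_all _ hV) _ _).trans
    (by gcongr; exact eLpNorm_inv_smul_le_of_weightedEnergy_le hE hC)

theorem norm_sub_sq_le_mul_setIntegral_of_weightedEnergy_le [CompleteSpace E]
    (hv : Continuous v) (hv0 : ∀ t, v t ≠ 0) (hu : ContDiff ℝ 1 u)
    (hE : weightedEnergy v u ≤ ENNReal.ofReal C) (hC : 0 ≤ C) (x y : ℝ) :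
    ‖u x - u y‖ ^ 2 ≤ C * ∫ t in Ι x y, (v t ^ 2)⁻¹ := by
  have hu' : Continuous (deriv u) := hu.continuous_deriv le_rfl
  have memLp_two {f : ℝ → ℝ} (hf : Continuous f) :
      MemLp f (ENNReal.ofReal 2) (volume.restrict (Ι x y)) := by
    rw [ENNReal.ofReal_ofNat, memLp_two_iff_integrable_sq hf.aestronglyMeasurable]
    exact (hf.pow 2).integrableOn_uIoc
  have hCS := integral_mul_le_Lp_mul_Lq_of_nonneg Real.HolderConjugate.two_two
    (ae_of_all _ fun t => by positivity) (ae_of_all _ fun t => by positivity)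
    (memLp_two (f := fun t => |v t| * ‖deriv u t‖) (by fun_prop))
    (memLp_two (f := fun t => |v t|⁻¹) (hv.abs.inv₀ fun t => abs_ne_zero.2 (hv0 t)))
  simp only [Real.rpow_two, mul_pow, sq_abs, inv_pow, ← Real.sqrt_eq_rpow] at hCS
  have hweight : ∫ t in Ι x y, v t ^ 2 * ‖deriv u t‖ ^ 2 ≤ C :=
    setIntegral_le_of_weightedEnergy_le hE hC (fun t => by
      rw [abs_of_nonneg (by positivity)]; exact le_add_of_nonneg_right (by positivity)) _
  calc ‖u x - u y‖ ^ 2 ≤ (∫ t in Ι x y, ‖deriv u t‖) ^ 2 := by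
        gcongr
        exact norm_sub_le_setIntegral_norm_deriv
          (fun t => (hu.differentiable one_ne_zero t).hasDerivAt) hu' x y
    _ = (∫ t in Ι x y, |v t| * ‖deriv u t‖ * |v t|⁻¹) ^ 2 := by
        congr 2 with t
        field_simp [abs_ne_zero.2 (hv0 t)]
    _ ≤ (∫ t in Ι x y, v t ^ 2 * ‖deriv u t‖ ^ 2) * ∫ t in Ι x y, (v t ^ 2)⁻¹ := by
        refine (pow_le_pow_left₀ (by positivity) hCS 2).trans_eq ?_
        rw [mul_pow, Real.sq_sqrt (by positivity), Real.sq_sqrt (by positivity)]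
    _ ≤ C * ∫ t in Ι x y, (v t ^ 2)⁻¹ := by
        gcongr

theorem equicontinuous_of_weightedEnergy_le [CompleteSpace E] {ι : Type*} {u : ι → ℝ → E}
    (hv : Continuous v) (hv0 : ∀ t, v t ≠ 0) (hu : ∀ i, ContDiff ℝ 1 (u i))
    (hE : ∀ i, weightedEnergy v (u i) ≤ ENNReal.ofReal C) (hC : 0 ≤ C) : Equicontinuous u := by
  intro x₀
  have hw : Continuous fun t => (v t ^ 2)⁻¹ := (hv.pow 2).inv₀ fun t => pow_ne_zero 2 (hv0 t)
  let b : ℝ → ℝ := fun x => √(C * |∫ t in x₀..x, (v t ^ 2)⁻¹|)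
  have hb : Continuous b := by
    have := intervalIntegral.continuous_primitive
      (fun a b => hw.intervalIntegrable (μ := volume) a b) x₀
    fun_prop
  refine Metric.equicontinuousAt_of_continuity_modulus b (by simpa [b] using hb.tendsto x₀) u
    (Eventually.of_forall fun x i => ?_)
  have hI : |∫ t in x₀..x, (v t ^ 2)⁻¹| = ∫ t in Ι x₀ x, (v t ^ 2)⁻¹ := by
    rw [intervalIntegral.abs_integral_eq_abs_integral_uIoc,
      abs_of_nonneg (setIntegral_nonneg_of_ae (ae_of_all _ fun t => by positivity))]
  rw [dist_eq_norm, ← Real.sqrt_sq (norm_nonneg _)]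
  simp only [b, hI]
  exact Real.sqrt_le_sqrt
    (norm_sub_sq_le_mul_setIntegral_of_weightedEnergy_le hv hv0 (hu i) (hE i) hC x₀ x)

end WeightedEnergy

theorem norm_sq_le_of_weightedEnergy_le {F : Type*} [NormedAddCommGroup F]
    [InnerProductSpace ℝ F] {v : ℝ → ℝ} {u : ℝ → F} {C : ℝ} (hv0 : ∀ t, v t ≠ 0)
    (hu : ContDiff ℝ 1 u) (hL2 : MemLp u 2 volume) (hE : weightedEnergy v u ≤ ENNReal.ofReal C)
    (hC : 0 ≤ C) (x : ℝ) : ‖u x‖ ^ 2 ≤ C := by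
  have hderiv : ∀ t, HasDerivAt (‖u ·‖ ^ 2) (2 * inner ℝ (u t) (deriv u t)) t :=
    fun t => (hu.differentiable one_ne_zero t).hasDerivAt.norm_sq
  have hcont : Continuous fun t => 2 * inner ℝ (u t) (deriv u t) := by
    have := hu.continuous; have := hu.continuous_deriv le_rfl; fun_prop
  have hdensity : ∀ t, |2 * inner ℝ (u t) (deriv u t)| ≤
      v t ^ 2 * ‖deriv u t‖ ^ 2 + (v t ^ 2)⁻¹ * ‖u t‖ ^ 2 := by
    intro t
    have := two_mul_le_add_sq (|v t| * ‖deriv u t‖) (|v t|⁻¹ * ‖u t‖)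
    rw [abs_mul, abs_two]
    calc 2 * |inner ℝ (u t) (deriv u t)| ≤ 2 * (‖u t‖ * ‖deriv u t‖) := by
          gcongr; exact abs_real_inner_le_norm _ _
      _ = 2 * (|v t| * ‖deriv u t‖) * (|v t|⁻¹ * ‖u t‖) := by
          field_simp [abs_ne_zero.2 (hv0 t)]
      _ ≤ _ := by simpa [mul_pow, inv_pow] using this
  have hosc : ∀ y, ‖u x‖ ^ 2 - ‖u y‖ ^ 2 ≤ C := fun y =>
    calc ‖u x‖ ^ 2 - ‖u y‖ ^ 2 ≤ ‖‖u x‖ ^ 2 - ‖u y‖ ^ 2‖ := le_norm_self _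
      _ ≤ ∫ t in Ι x y, ‖2 * inner ℝ (u t) (deriv u t)‖ :=
          norm_sub_le_setIntegral_norm_deriv hderiv hcont x y
      _ ≤ C := setIntegral_le_of_weightedEnergy_le hE hC
          (fun t => by simpa only [Real.norm_eq_abs, abs_abs] using hdensity t) _
  refine le_of_forall_pos_lt_add fun δ hδ => ?_
  obtain ⟨y, hy⟩ := (hL2.integrable_norm_pow two_ne_zero).exists_lt Real.volume_univ hδ
  linarith [hosc y]

/-- If `v` is continuous, positive, and `v(ξ) → 0` as `|ξ| → ∞`, then every sequence of `C¹`
functions `u_n ∈ L²(ℝ)` with `∫ (v²|u_n'|² + v⁻²|u_n|²) ≤ C` has a subsequence converging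
in `L²(ℝ)`. -/
theorem weighted_bounded_implies_L2_compact
    (v : ℝ → ℝ) (hvcont : Continuous v) (hvpos : ∀ ξ, 0 < v ξ)
    (hvlim : Tendsto v (cocompact ℝ) (nhds 0))
    (u : ℕ → ℝ → ℂ)
    (hu : ∀ n, ContDiff ℝ 1 (u n)) (huL2 : ∀ n, MemLp (u n) 2 (volume : Measure ℝ))
    (C : ℝ)
    (hbound : ∀ n, (∫⁻ ξ, ENNReal.ofReal ((v ξ) ^ 2 * ‖deriv (u n) ξ‖ ^ 2)
        + ENNReal.ofReal (((v ξ) ^ 2)⁻¹ * ‖u n ξ‖ ^ 2)) ≤ ENNReal.ofReal C) :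
    ∃ φ : ℕ → ℕ, StrictMono φ ∧ ∃ w : ℝ → ℂ, MemLp w 2 (volume : Measure ℝ) ∧
      Tendsto (fun k => eLpNorm (fun ξ => u (φ k) ξ - w ξ) 2 (volume : Measure ℝ))
        atTop (nhds 0) := by
  obtain ⟨C', hC', hE⟩ : ∃ C', 0 ≤ C' ∧ ∀ n, weightedEnergy v (u n) ≤ ENNReal.ofReal C' :=
    ⟨max C 0, le_max_right _ _, fun n => (hbound n).trans (ofReal_le_ofReal (le_max_left _ _))⟩
  have hv0 : ∀ ξ, v ξ ≠ 0 := fun ξ => (hvpos ξ).ne'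
  obtain ⟨V, hV⟩ : ∃ V, ∀ ξ, ‖v ξ‖ ≤ V :=
    let v₀ : ZeroAtInftyContinuousMap ℝ ℝ := ⟨⟨v, hvcont⟩, hvlim⟩
    ⟨‖v₀.toBCF‖, v₀.toBCF.norm_coe_le_norm⟩
  have hmeas : ∀ n, AEStronglyMeasurable (u n) volume := fun n => (huL2 n).aestronglyMeasurable
  have hsup : ∀ n ξ, ‖u n ξ‖ ≤ √C' := fun n ξ =>
    Real.le_sqrt_of_sq_le (norm_sq_le_of_weightedEnergy_le hv0 (hu n) (huL2 n) (hE n) hC' ξ)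
  have hequi : Equicontinuous u := equicontinuous_of_weightedEnergy_le hvcont hv0 hu hE hC'
  obtain ⟨φ, hφ, w, hw⟩ := hequi.exists_strictMono_tendstoLocallyUniformly fun ξ =>
    ⟨Metric.closedBall 0 √C', isCompact_closedBall _ _,
      fun n => mem_closedBall_zero_iff.2 (hsup n ξ)⟩
  have hw_tendsto : ∀ᵐ ξ ∂volume, Tendsto (fun k => u (φ k) ξ) atTop (𝓝 (w ξ)) :=
    ae_of_all _ fun ξ => hw.tendstoLocallyUniformlyOn.tendsto_at (mem_univ ξ)
  have hwL2 : MemLp w 2 volume :=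
    memLp_of_ae_tendsto_of_eLpNorm_le (mul_ne_top ofReal_ne_top ofReal_ne_top) (fun k => hmeas _)
      (fun k => eLpNorm_le_of_weightedEnergy_le hv0 hV (hE (φ k)) hC') hw_tendsto
  refine ⟨φ, hφ, w, hwL2, tendsto_Lp_of_tendsto_ae one_le_two ofNat_ne_top (fun k => hmeas _) hwL2
    (unifIntegrable_of_forall_norm_le one_le_two ofNat_ne_top (fun k => hmeas _)
      fun k => hsup (φ k))
    (unifTight_of_eLpNorm_inv_smul_le hv0 hvlim ofReal_ne_top
      fun k => eLpNorm_inv_smul_le_of_weightedEnergy_le (hE (φ k)) hC') hw_tendsto⟩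
end

section
/- Let K ≥ 1, t_0 > 0, and h_0, …, h_K ∈ ℝ. If f, z : [0,t_0] → ℂ are K-times continuously differentiable and satisfy f^{(k)}(0) = 0 and z^{(k)}(0) = 0 for k = 0, …, K−1, then ∫_0^{t_0} (Σ_{k=0}^K (−1)^k h_k f^{(k)}(t_0−t)) · conj(z(t)) dt = ∫_0^{t_0} f(t) · conj(Σ_{k=0}^K (−1)^k h_k z^{(k)}(t_0−t)) dt. -/
/-!
The sum splits into the terms `k ≤ K`, and each is symmetric on its own: `k` integrations by
parts move the derivatives from `f (t₀ - ·)` onto `conj ∘ z` one at a time, and the substitution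
`t ↦ t₀ - t` finishes. Every boundary term contains a factor `f⁽ᵐ⁾(0)` or `z⁽ʲ⁾(0)` with
`m, j < K`, so it vanishes; the real coefficients `h k` commute with conjugation.
-/

open MeasureTheory Real Set ComplexConjugate

section Star

variable {𝕜 F : Type*} [NontriviallyNormedField 𝕜] [StarRing 𝕜] [TrivialStar 𝕜]
  [NormedAddCommGroup F] [NormedSpace 𝕜 F] [StarAddMonoid F] [StarModule 𝕜 F] [ContinuousStar F]

theorem iteratedDerivWithin_star (n : ℕ) (f : 𝕜 → F) (s : Set 𝕜) :
    iteratedDerivWithin n (fun y => star (f y)) s =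
      fun y => star (iteratedDerivWithin n f s y) := by
  induction n with
  | zero => simp only [iteratedDerivWithin_zero]
  | succ n ih =>
    funext x
    rw [iteratedDerivWithin_succ, iteratedDerivWithin_succ, ih]
    exact derivWithin.star

end Star

theorem ContDiffOn.hasDerivWithinAt_iteratedDerivWithin {𝕜 F : Type*}
    [NontriviallyNormedField 𝕜] [NormedAddCommGroup F] [NormedSpace 𝕜 F] {f : 𝕜 → F} {s : Set 𝕜}
    {x : 𝕜} {n : WithTop ℕ∞} {m : ℕ}
    (h : ContDiffOn 𝕜 n f s) (hmn : m < n) (hs : UniqueDiffOn 𝕜 s) (hx : x ∈ s) :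
    HasDerivWithinAt (iteratedDerivWithin m f s) (iteratedDerivWithin (m + 1) f s x) s x := by
  rw [iteratedDerivWithin_succ]
  exact (h.differentiableOn_iteratedDerivWithin hmn hs x hx).hasDerivWithinAt

theorem mapsTo_const_sub_Icc (t₀ : ℝ) : MapsTo (t₀ - ·) (Icc 0 t₀) (Icc 0 t₀) :=
  fun _ ⟨h0, h1⟩ => ⟨by linarith, by linarith⟩

section Reflection

variable {A : Type*} [NormedRing A] [NormedAlgebra ℝ A] [CompleteSpace A] {t₀ : ℝ}

-- The boundary terms of this integration by parts are `u 0 * v t₀` and `u t₀ * v 0`.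
theorem integral_comp_const_sub_mul_deriv_eq (ht₀ : 0 ≤ t₀) {u u' v v' : ℝ → A}
    (hu : ∀ x ∈ Icc 0 t₀, HasDerivWithinAt u (u' x) (Icc 0 t₀) x)
    (hv : ∀ x ∈ Icc 0 t₀, HasDerivWithinAt v (v' x) (Icc 0 t₀) x)
    (hu' : IntervalIntegrable u' volume 0 t₀) (hv' : IntervalIntegrable v' volume 0 t₀)
    (hu0 : u 0 = 0) (hv0 : v 0 = 0) :
    ∫ t in 0..t₀, u' (t₀ - t) * v t = ∫ t in 0..t₀, u (t₀ - t) * v' t := by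
  have hU : ∀ x ∈ uIcc 0 t₀,
      HasDerivWithinAt (fun t => -u (t₀ - t)) (u' (t₀ - x)) (uIcc 0 t₀) x := by
    rw [uIcc_of_le ht₀]
    intro x hx
    have hcomp := ((hu (t₀ - x) (mapsTo_const_sub_Icc t₀ hx)).scomp x
      ((hasDerivWithinAt_id x _).const_sub t₀) (mapsTo_const_sub_Icc t₀)).neg
    simpa [Function.comp_def, Pi.neg_def] using hcomp
  have hU' : IntervalIntegrable (fun t => u' (t₀ - t)) volume 0 t₀ := by
    simpa using (hu'.comp_sub_left t₀).symm
  have hibp := intervalIntegral.integral_mul_deriv_eq_deriv_mul_of_hasDerivWithinAt hU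
    (by rwa [uIcc_of_le ht₀]) hU' hv'
  simp only [sub_self, sub_zero, hu0, hv0, neg_zero, zero_mul, mul_zero, zero_sub, neg_mul,
    intervalIntegral.integral_neg, neg_inj] at hibp
  exact hibp.symm

variable {K : ℕ} {u v : ℝ → A}

theorem integral_iteratedDerivWithin_comp_const_sub_mul_eq (ht₀ : 0 < t₀)
    (hu : ContDiffOn ℝ K u (Icc 0 t₀)) (hv : ContDiffOn ℝ K v (Icc 0 t₀))
    (hu0 : ∀ k < K, iteratedDerivWithin k u (Icc 0 t₀) 0 = 0)
    (hv0 : ∀ k < K, iteratedDerivWithin k v (Icc 0 t₀) 0 = 0) {m j : ℕ} (hmj : m + j ≤ K) :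
    ∫ t in 0..t₀, iteratedDerivWithin (m + j) u (Icc 0 t₀) (t₀ - t) * v t
      = ∫ t in 0..t₀, iteratedDerivWithin m u (Icc 0 t₀) (t₀ - t)
          * iteratedDerivWithin j v (Icc 0 t₀) t := by
  have hs : UniqueDiffOn ℝ (Icc 0 t₀) := uniqueDiffOn_Icc ht₀
  induction j generalizing m with
  | zero => rfl
  | succ j ih =>
    have hm : m < K := by omega
    have hj : j < K := by omega
    rw [show m + (j + 1) = m + 1 + j by omega, ih (by omega)]
    exact integral_comp_const_sub_mul_deriv_eq ht₀.le
      (fun x hx => hu.hasDerivWithinAt_iteratedDerivWithin (by exact_mod_cast hm) hs hx)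
      (fun x hx => hv.hasDerivWithinAt_iteratedDerivWithin (by exact_mod_cast hj) hs hx)
      ((hu.continuousOn_iteratedDerivWithin (by exact_mod_cast hm) hs).intervalIntegrable_of_Icc
        ht₀.le)
      ((hv.continuousOn_iteratedDerivWithin (by exact_mod_cast hj) hs).intervalIntegrable_of_Icc
        ht₀.le)
      (hu0 m hm) (hv0 j hj)

theorem integral_iteratedDerivWithin_comp_const_sub_mul_comm (ht₀ : 0 < t₀)
    (hu : ContDiffOn ℝ K u (Icc 0 t₀)) (hv : ContDiffOn ℝ K v (Icc 0 t₀))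
    (hu0 : ∀ k < K, iteratedDerivWithin k u (Icc 0 t₀) 0 = 0)
    (hv0 : ∀ k < K, iteratedDerivWithin k v (Icc 0 t₀) 0 = 0) {k : ℕ} (hk : k ≤ K) :
    ∫ t in 0..t₀, iteratedDerivWithin k u (Icc 0 t₀) (t₀ - t) * v t
      = ∫ t in 0..t₀, u t * iteratedDerivWithin k v (Icc 0 t₀) (t₀ - t) := by
  have hmoved := integral_iteratedDerivWithin_comp_const_sub_mul_eq ht₀ hu hv hu0 hv0
    (m := 0) (j := k) (by omega)
  rw [zero_add] at hmoved
  rw [hmoved]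
  simpa using intervalIntegral.integral_comp_sub_left
    (fun t => u t * iteratedDerivWithin k v (Icc 0 t₀) (t₀ - t)) t₀ (a := 0) (b := t₀)

end Reflection

theorem integral_iteratedDerivWithin_comp_const_sub_mul_conj_comm {K k : ℕ} {t₀ : ℝ}
    (ht₀ : 0 < t₀) {f z : ℝ → ℂ}
    (hf : ContDiffOn ℝ K f (Icc 0 t₀)) (hz : ContDiffOn ℝ K z (Icc 0 t₀))
    (hf0 : ∀ k < K, iteratedDerivWithin k f (Icc 0 t₀) 0 = 0)
    (hz0 : ∀ k < K, iteratedDerivWithin k z (Icc 0 t₀) 0 = 0) (hk : k ≤ K) :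
    ∫ t in 0..t₀, iteratedDerivWithin k f (Icc 0 t₀) (t₀ - t) * conj (z t)
      = ∫ t in 0..t₀, f t * conj (iteratedDerivWithin k z (Icc 0 t₀) (t₀ - t)) := by
  have hzc : ContDiffOn ℝ K (fun t => star (z t)) (Icc 0 t₀) :=
    Complex.conjCLE.contDiff.comp_contDiffOn hz
  have hzc0 : ∀ k < K, iteratedDerivWithin k (fun t => star (z t)) (Icc 0 t₀) 0 = 0 :=
    fun k hk => by simp only [iteratedDerivWithin_star, hz0 k hk, star_zero]
  have hsymm := integral_iteratedDerivWithin_comp_const_sub_mul_comm ht₀ hf hzc hf0 hzc0 hk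
  rwa [iteratedDerivWithin_star] at hsymm

theorem ContDiffOn.continuousOn_iteratedDerivWithin_comp_const_sub {E : Type*}
    [NormedAddCommGroup E] [NormedSpace ℝ E] {K k : ℕ} {t₀ : ℝ} (ht₀ : 0 < t₀) {u : ℝ → E}
    (hu : ContDiffOn ℝ K u (Icc 0 t₀)) (hk : k ≤ K) :
    ContinuousOn (fun t => iteratedDerivWithin k u (Icc 0 t₀) (t₀ - t)) (Icc 0 t₀) :=
  (hu.continuousOn_iteratedDerivWithin (by exact_mod_cast hk) (uniqueDiffOn_Icc ht₀)).comp
    (continuousOn_const.sub continuousOn_id) (mapsTo_const_sub_Icc t₀)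

theorem intervalIntegral.integral_finsetSum_const_mul {𝕜 ι : Type*} [NormedDivisionRing 𝕜]
    [NormedAlgebra ℝ 𝕜] [CompleteSpace 𝕜] {a b : ℝ} (s : Finset ι) (c : ι → 𝕜)
    {g : ι → ℝ → 𝕜} (hg : ∀ i ∈ s, IntervalIntegrable (g i) volume a b) :
    ∫ x in a..b, ∑ i ∈ s, c i * g i x = ∑ i ∈ s, c i * ∫ x in a..b, g i x := by
  rw [intervalIntegral.integral_finsetSum fun i hi => (hg i hi).const_mul (c i)]
  exact Finset.sum_congr rfl fun i _ => intervalIntegral.integral_const_mul _ _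

theorem delta_kernel_hankel_symmetric_general
    (K : ℕ) (t₀ : ℝ) (ht₀ : 0 < t₀) (h : ℕ → ℝ)
    (f z : ℝ → ℂ)
    (hf : ContDiffOn ℝ K f (Icc 0 t₀)) (hz : ContDiffOn ℝ K z (Icc 0 t₀))
    (hf0 : ∀ k < K, iteratedDerivWithin k f (Icc 0 t₀) 0 = 0)
    (hz0 : ∀ k < K, iteratedDerivWithin k z (Icc 0 t₀) 0 = 0) :
    ∫ t in (0 : ℝ)..t₀,
        (∑ k ∈ Finset.range (K + 1),
            (-1 : ℂ) ^ k * (h k : ℂ) * iteratedDerivWithin k f (Icc 0 t₀) (t₀ - t))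
          * conj (z t)
      = ∫ t in (0 : ℝ)..t₀,
          f t * conj (∑ k ∈ Finset.range (K + 1),
            (-1 : ℂ) ^ k * (h k : ℂ) * iteratedDerivWithin k z (Icc 0 t₀) (t₀ - t)) := by
  calc _ = ∫ t in 0..t₀, ∑ k ∈ Finset.range (K + 1),
          (-1 : ℂ) ^ k * h k * (iteratedDerivWithin k f (Icc 0 t₀) (t₀ - t) * conj (z t)) := by
        simp only [Finset.sum_mul, mul_assoc]
    _ = ∫ t in 0..t₀, ∑ k ∈ Finset.range (K + 1),
          (-1 : ℂ) ^ k * h k * (f t * conj (iteratedDerivWithin k z (Icc 0 t₀) (t₀ - t))) := by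
        rw [intervalIntegral.integral_finsetSum_const_mul,
          intervalIntegral.integral_finsetSum_const_mul]
        · refine Finset.sum_congr rfl fun k hk => ?_
          rw [integral_iteratedDerivWithin_comp_const_sub_mul_conj_comm ht₀ hf hz hf0 hz0
            (Finset.mem_range_succ_iff.mp hk)]
        · exact fun k hk => ContinuousOn.intervalIntegrable_of_Icc ht₀.le <| hf.continuousOn.mul
            (hz.continuousOn_iteratedDerivWithin_comp_const_sub ht₀
              (Finset.mem_range_succ_iff.mp hk)).star
        · exact fun k hk => ContinuousOn.intervalIntegrable_of_Icc ht₀.le <|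
            (hf.continuousOn_iteratedDerivWithin_comp_const_sub ht₀
              (Finset.mem_range_succ_iff.mp hk)).mul hz.continuousOn.star
    _ = _ := by
        congr 1 with t
        simp only [map_sum, map_mul, map_pow, map_neg, map_one, Complex.conj_ofReal,
          Finset.mul_sum]
        exact Finset.sum_congr rfl fun k _ => by ring

/-- Symmetry of the operator `(Hf)(t) = ∑_{k=0}^K (−1)^k h_k f^{(k)}(t₀−t)` on `[0,t₀]`
under the boundary conditions `f^{(k)}(0) = 0`, `0 ≤ k ≤ K−1` (corresponding to the Hankel
operator with kernel `h(t) = ∑_k h_k δ^{(k)}(t−t₀)`). -/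
theorem delta_kernel_hankel_symmetric
    (K : ℕ) (hK : 1 ≤ K) (t₀ : ℝ) (ht₀ : 0 < t₀) (h : ℕ → ℝ)
    (f z : ℝ → ℂ)
    (hf : ContDiffOn ℝ K f (Icc 0 t₀)) (hz : ContDiffOn ℝ K z (Icc 0 t₀))
    (hf0 : ∀ k < K, iteratedDerivWithin k f (Icc 0 t₀) 0 = 0)
    (hz0 : ∀ k < K, iteratedDerivWithin k z (Icc 0 t₀) 0 = 0) :
    ∫ t in (0 : ℝ)..t₀,
        (∑ k ∈ Finset.range (K + 1),
            (-1 : ℂ) ^ k * (h k : ℂ) * iteratedDerivWithin k f (Icc 0 t₀) (t₀ - t))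
          * conj (z t)
      = ∫ t in (0 : ℝ)..t₀,
          f t * conj (∑ k ∈ Finset.range (K + 1),
            (-1 : ℂ) ^ k * (h k : ℂ) * iteratedDerivWithin k z (Icc 0 t₀) (t₀ - t)) :=
  delta_kernel_hankel_symmetric_general K t₀ ht₀ h f z hf hz hf0 hz0
end

section
/- Let t_0 > 0 and λ ∈ ℝ. There exists a continuously differentiable function f : [0,t_0] → ℂ, not identically zero, with f(0) = 0 and −f'(t_0 − t) = λ f(t) for all t ∈ [0,t_0], if and only if sin(λ t_0) = −1, i.e. if and only if λ = 2π(n − 1/4)/t_0 for some integer n. (The positive such λ are 2π t_0^{-1}(n − 1/4), n ≥ 1, and the negative ones are −2π t_0^{-1}(n − 3/4), n ≥ 1; corresponding eigenfunctions are f(t) = sin(λ t).) -/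
/-!
For `ε = ±i` the combination `w = f + ε f(t₀ - ·)` satisfies `w' = ελ w`, so
`w(t) = e^{ελt} w(0) = e^{ελt} ε f(t₀)` by `f(0) = 0`. Averaging the two solutions gives
`f(t) = -f(t₀) sin(λt)`; hence `f ≢ 0` forces `f(t₀) ≠ 0`, and `t = t₀` gives `sin(λt₀) = -1`.
Conversely `sin(λ·)` is an eigenfunction as soon as `sin(λt₀) = -1`.
-/

open Set Real

lemma HasDerivWithinAt.comp_const_sub_of_mapsTo {𝕜 F : Type*} [NontriviallyNormedField 𝕜]
    [NormedAddCommGroup F] [NormedSpace 𝕜 F] {f : 𝕜 → F} {f' : F} {s t : Set 𝕜} {a x : 𝕜}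
    (hf : HasDerivWithinAt f f' s (a - x)) (hst : MapsTo (a - ·) t s) :
    HasDerivWithinAt (fun x ↦ f (a - x)) (-f') t x := by
  simpa [Function.comp_def] using hf.scomp x ((hasDerivWithinAt_id x t).const_sub a) hst

lemma eq_cexp_mul_of_hasDerivWithinAt_mul {a b : ℝ} {c : ℂ} {u : ℝ → ℂ}
    (hu : ∀ t ∈ Icc a b, HasDerivWithinAt u (c * u t) (Icc a b) t) :
    ∀ t ∈ Icc a b, u t = Complex.exp (c * (t - a)) * u a := by
  set g : ℝ → ℂ := fun t ↦ Complex.exp (-c * (t - a)) * u t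
  have hg : ∀ t ∈ Icc a b, HasDerivWithinAt g 0 (Icc a b) t := fun t ht ↦ by
    have he : HasDerivAt (fun t : ℝ ↦ Complex.exp (-c * (t - a)))
        (Complex.exp (-c * (t - a)) * (-c * 1)) t :=
      (((hasDerivAt_id t).ofReal_comp.sub_const (a : ℂ)).const_mul (-c)).cexp
    exact (he.hasDerivWithinAt.mul (hu t ht)).congr_deriv (by ring)
  have hconst := constant_of_has_deriv_right_zero
    (fun t ht ↦ (hg t ht).continuousWithinAt)
    (fun t ht ↦ (hg t (Ico_subset_Icc_self ht)).mono_of_mem_nhdsWithin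
      (Icc_mem_nhdsGE_of_mem ht))
  intro t ht
  have h := hconst t ht
  simp only [g, sub_self, mul_zero, Complex.exp_zero, one_mul] at h
  rw [← h, ← mul_assoc, ← Complex.exp_add, neg_mul, add_neg_cancel, Complex.exp_zero, one_mul]

section Eigenfunction

variable {T lam : ℝ} {f : ℝ → ℂ}

lemma hasDerivWithinAt_add_mul_comp_const_sub (hf : DifferentiableOn ℝ f (Icc 0 T))
    (heq : ∀ t ∈ Icc 0 T, -derivWithin f (Icc 0 T) (T - t) = lam * f t)
    {ε : ℂ} (hε : ε ^ 2 = -1) :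
    ∀ t ∈ Icc 0 T, HasDerivWithinAt (fun s ↦ f s + ε * f (T - s))
      (ε * lam * (f t + ε * f (T - t))) (Icc 0 T) t := by
  have hmaps : MapsTo (T - ·) (Icc 0 T) (Icc 0 T) := fun t ht ↦
    ⟨by linarith [ht.2], by linarith [ht.1]⟩
  intro t ht
  have heq' := heq (T - t) (hmaps ht)
  rw [sub_sub_cancel] at heq'
  have hrefl := ((hf _ (hmaps ht)).hasDerivWithinAt.comp_const_sub_of_mapsTo hmaps).const_mul ε
  refine ((hf t ht).hasDerivWithinAt.add hrefl).congr_deriv ?_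
  linear_combination ε * heq t ht - heq' - (lam * f (T - t)) * hε

lemma eigenfunction_eq_neg_mul_sin (hf : DifferentiableOn ℝ f (Icc 0 T)) (h0 : f 0 = 0)
    (heq : ∀ t ∈ Icc 0 T, -derivWithin f (Icc 0 T) (T - t) = lam * f t) :
    ∀ t ∈ Icc 0 T, f t = -(f T * Complex.sin (lam * t)) := by
  intro t ht
  have hplus := eq_cexp_mul_of_hasDerivWithinAt_mul
    (hasDerivWithinAt_add_mul_comp_const_sub hf heq Complex.I_sq) t ht
  have hminus := eq_cexp_mul_of_hasDerivWithinAt_mul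
    (hasDerivWithinAt_add_mul_comp_const_sub hf heq (ε := -Complex.I) (by simp)) t ht
  simp only [Complex.ofReal_zero, sub_zero, h0, zero_add] at hplus hminus
  rw [Complex.sin, show (lam : ℂ) * t * Complex.I = Complex.I * lam * t by ring,
    show -((lam : ℂ) * t) * Complex.I = -Complex.I * lam * t by ring]
  linear_combination (hplus + hminus) / 2

lemma sin_mul_eq_neg_one_of_eigenfunction (hf : DifferentiableOn ℝ f (Icc 0 T)) (h0 : f 0 = 0)
    (heq : ∀ t ∈ Icc 0 T, -derivWithin f (Icc 0 T) (T - t) = lam * f t)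
    (hne : ∃ t ∈ Icc 0 T, f t ≠ 0) : Real.sin (lam * T) = -1 := by
  obtain ⟨s, hs, hfs⟩ := hne
  have hf_eq := eigenfunction_eq_neg_mul_sin hf h0 heq
  have hfT : f T ≠ 0 := fun hfT ↦ hfs (by simp [hf_eq s hs, hfT])
  have hsin : f T * (Complex.sin (lam * T) + 1) = 0 := by
    linear_combination hf_eq T (right_mem_Icc.2 (hs.1.trans hs.2))
  have := eq_neg_of_add_eq_zero_left ((mul_eq_zero.1 hsin).resolve_left hfT)
  exact_mod_cast this

end Eigenfunction

lemma neg_derivWithin_sin_mul_const_sub {T lam : ℝ} (hT : 0 < T)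
    (hsin : Real.sin (lam * T) = -1) :
    ∀ t ∈ Icc 0 T, -derivWithin (fun s : ℝ ↦ (Real.sin (lam * s) : ℂ)) (Icc 0 T) (T - t)
      = lam * Real.sin (lam * t) := by
  have hcos : Real.cos (lam * T) = 0 := by
    nlinarith [Real.sin_sq_add_cos_sq (lam * T)]
  intro t ht
  have hderiv : HasDerivAt (fun s : ℝ ↦ (Real.sin (lam * s) : ℂ))
      (lam * Real.cos (lam * (T - t)) : ℝ) (T - t) := by
    simpa [mul_comm] using ((hasDerivAt_id (T - t)).const_mul lam).sin.ofReal_comp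
  rw [hderiv.hasDerivWithinAt.derivWithin
      (uniqueDiffOn_Icc hT _ ⟨by linarith [ht.2], by linarith [ht.1]⟩),
    mul_sub, Real.cos_sub, hcos, hsin]
  push_cast
  ring

lemma sin_mul_eq_neg_one_iff {T lam : ℝ} (hT : T ≠ 0) :
    Real.sin (lam * T) = -1 ↔ ∃ n : ℤ, lam = 2 * π * ((n : ℝ) - 1 / 4) / T := by
  rw [Real.sin_eq_neg_one_iff]
  refine exists_congr fun n ↦ ?_
  rw [eq_div_iff hT]
  constructor <;> intro h <;> linarith

/-- Eigenvalues of the Hankel operator with kernel `δ'(t−t₀)`, i.e. of the problem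
`−f'(t₀−t) = λ f(t)` on `[0,t₀]` with `f(0) = 0`: a nonzero eigenfunction exists if and
only if `sin(λt₀) = −1`, i.e. iff `λ = 2π(n − 1/4)/t₀` for some integer `n`. -/
theorem delta_prime_kernel_eigenvalues
    (t₀ : ℝ) (ht₀ : 0 < t₀) (lam : ℝ) :
    ((∃ f : ℝ → ℂ, ContDiffOn ℝ 1 f (Icc 0 t₀)
        ∧ (∃ t ∈ Icc (0 : ℝ) t₀, f t ≠ 0)
        ∧ f 0 = 0
        ∧ ∀ t ∈ Icc (0 : ℝ) t₀,
            -derivWithin f (Icc 0 t₀) (t₀ - t) = (lam : ℂ) * f t)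
      ↔ Real.sin (lam * t₀) = -1)
    ∧ (Real.sin (lam * t₀) = -1 ↔ ∃ n : ℤ, lam = 2 * π * ((n : ℝ) - 1 / 4) / t₀) := by
  refine ⟨⟨fun ⟨f, hf, hne, h0, heq⟩ ↦ ?_, fun hsin ↦ ?_⟩, sin_mul_eq_neg_one_iff ht₀.ne'⟩
  · exact sin_mul_eq_neg_one_of_eigenfunction (hf.differentiableOn one_ne_zero) h0 heq hne
  · have hcontDiff : ContDiff ℝ 1 fun s : ℝ ↦ (Real.sin (lam * s) : ℂ) :=
      Complex.ofRealCLM.contDiff.comp (Real.contDiff_sin.comp (contDiff_const.mul contDiff_id))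
    exact ⟨fun s ↦ (Real.sin (lam * s) : ℂ), hcontDiff.contDiffOn,
      ⟨t₀, right_mem_Icc.2 ht₀.le, by simp [hsin]⟩, by simp,
      neg_derivWithin_sin_mul_const_sub ht₀ hsin⟩
end
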